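/- arXiv:2207.03423 — 5 statements merged into one kernel-verified Lean document; each statement's English description precedes it below -/
import Mathlib

section
/- Fix a real number N > 1. There exist constants C > 0 and w̄ ∈ (0, 1/2), depending only on N, such that for every D > 0 and every w ∈ (0, w̄] one has 𝓘_{N,D}(w) ≥ (N/D) · w^{1-1/N} · (1 − C·w^{1/N}). Equivalently, inf_{ξ ≥ 0} G_N(ξ, w) ≥ 1 − C·w^{1/N} for all w ∈ (0, w̄]. -/
/-!
Write `s = (ξ+1)^N - ξ^N`, so that `G_N(ξ, w) = (s + ξ^N / w)^((N-1)/N) / s`. Since `s ≤ (ξ+1)^N`,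
always `G_N(ξ, w) ≥ s^(-1/N) ≥ 1/(ξ+1)`. By Bernoulli's inequality `s ≤ N (ξ+1)^(N-1)`, so once
`ξ/(ξ+1) ≥ N^(1/(N-1)) w^(1/N)` the term `ξ^N / w` dominates `s^(N/(N-1))` and `G_N(ξ, w) ≥ 1`.
With `C = 2 N^(1/(N-1))` and `w ≤ C^(-N)` we have `x = C w^(1/N) ≤ 1`: for `ξ ≤ x` the first bound
gives `G_N(ξ, w) ≥ 1 - x`, and for `ξ > x` we have `ξ/(ξ+1) ≥ x/2`, so the second one applies.
-/

noncomputable section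

/-- The auxiliary function `G_N(ξ, v)` from the paper. -/
def GN (N ξ v : ℝ) : ℝ :=
  ((ξ + 1) ^ N + (1 / v - 1) * ξ ^ N) ^ ((N - 1) / N) / ((ξ + 1) ^ N - ξ ^ N)

/-- The model isoperimetric profile `𝓘_{N,D}(v)`. -/
def modelProfile (N D v : ℝ) : ℝ :=
  (N / D) * sInf {y : ℝ | ∃ ξ : ℝ, 0 ≤ ξ ∧
    y = (min v (1 - v) * (ξ + 1) ^ N + max v (1 - v) * ξ ^ N) ^ ((N - 1) / N) /
        ((ξ + 1) ^ N - ξ ^ N)}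

open Real

lemma rpow_add_one_sub_rpow_pos {N ξ : ℝ} (hN : 0 < N) (hξ : 0 ≤ ξ) :
    0 < (ξ + 1) ^ N - ξ ^ N :=
  sub_pos.mpr (rpow_lt_rpow hξ (lt_add_one ξ) hN)

lemma rpow_add_one_sub_rpow_le {N ξ : ℝ} (hN : 1 ≤ N) (hξ : 0 ≤ ξ) :
    (ξ + 1) ^ N - ξ ^ N ≤ N * (ξ + 1) ^ (N - 1) := by
  have hξ1 : 0 < ξ + 1 := by linarith
  have bernoulli := one_add_mul_self_le_rpow_one_add
    (s := -(ξ + 1)⁻¹) (by linarith [inv_le_one_of_one_le₀ (by linarith : 1 ≤ ξ + 1)]) hN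
  have hbase : 1 + -(ξ + 1)⁻¹ = ξ / (ξ + 1) := by field_simp; ring
  rw [hbase, div_rpow hξ hξ1.le, le_div_iff₀ (rpow_pos_of_pos hξ1 N)] at bernoulli
  have hpow : (ξ + 1)⁻¹ * (ξ + 1) ^ N = (ξ + 1) ^ (N - 1) := by
    rw [rpow_sub_one hξ1.ne', div_eq_inv_mul]
  linear_combination bernoulli + N * hpow

lemma GN_eq {N ξ w : ℝ} (hw : 0 < w) :
    GN N ξ w = ((ξ + 1) ^ N - ξ ^ N + ξ ^ N / w) ^ ((N - 1) / N) / ((ξ + 1) ^ N - ξ ^ N) := by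
  rw [GN]
  congr 2
  field_simp
  ring

lemma inv_add_one_le_GN {N ξ w : ℝ} (hN : 1 ≤ N) (hξ : 0 ≤ ξ) (hw : 0 < w) :
    (ξ + 1)⁻¹ ≤ GN N ξ w := by
  have hN0 : 0 < N := by linarith
  set s := (ξ + 1) ^ N - ξ ^ N
  have hs : 0 < s := rpow_add_one_sub_rpow_pos hN0 hξ
  have hξ1 : 0 < ξ + 1 := by linarith
  calc (ξ + 1)⁻¹ = ((ξ + 1) ^ N) ^ (-N⁻¹) := by
        rw [← rpow_mul hξ1.le, mul_neg, mul_inv_cancel₀ hN0.ne', rpow_neg_one]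
    _ ≤ s ^ (-N⁻¹) :=
        rpow_le_rpow_of_nonpos hs (by linarith [rpow_nonneg hξ N]) (by simp [hN0.le])
    _ = s ^ ((N - 1) / N) / s := by
        rw [div_eq_mul_inv (s ^ _) s, ← rpow_neg_one s, ← rpow_add hs]
        congr 1
        field_simp
        ring
    _ ≤ GN N ξ w := by
        rw [GN_eq hw]
        gcongr
        exact le_add_of_nonneg_right (by positivity)

lemma one_le_GN {N ξ w : ℝ} (hN : 1 < N) (hξ : 0 ≤ ξ) (hw : 0 < w)
    (hξw : N ^ (1 / (N - 1)) * w ^ (1 / N) ≤ ξ / (ξ + 1)) : 1 ≤ GN N ξ w := by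
  have hN0 : 0 < N := by linarith
  have hN1 : N - 1 ≠ 0 := by linarith
  have hξ1 : 0 < ξ + 1 := by linarith
  set s := (ξ + 1) ^ N - ξ ^ N
  have hs : 0 < s := rpow_add_one_sub_rpow_pos hN0 hξ
  have hexp : 0 ≤ N / (N - 1) := div_nonneg hN0.le (by linarith)
  have hlarge : N ^ (N / (N - 1)) * (ξ + 1) ^ N ≤ ξ ^ N / w := by
    have h := rpow_le_rpow (by positivity) hξw hN0.le
    rw [mul_rpow (by positivity) (by positivity), ← rpow_mul hN0.le, ← rpow_mul hw.le,
      div_rpow hξ hξ1.le, one_div_mul_cancel hN0.ne', rpow_one, one_div_mul_eq_div,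
      le_div_iff₀ (by positivity)] at h
    rw [le_div_iff₀ hw]
    linarith
  have hsmall : s ^ (N / (N - 1)) ≤ N ^ (N / (N - 1)) * (ξ + 1) ^ N := by
    calc s ^ (N / (N - 1)) ≤ (N * (ξ + 1) ^ (N - 1)) ^ (N / (N - 1)) :=
          rpow_le_rpow hs.le (rpow_add_one_sub_rpow_le hN.le hξ) hexp
      _ = N ^ (N / (N - 1)) * (ξ + 1) ^ N := by
          rw [mul_rpow hN0.le (by positivity), ← rpow_mul hξ1.le, mul_div_cancel₀ _ hN1]
  have hs_le : s ≤ (s + ξ ^ N / w) ^ ((N - 1) / N) := by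
    calc s = (s ^ (N / (N - 1))) ^ ((N - 1) / N) := by
          rw [← rpow_mul hs.le, show N / (N - 1) * ((N - 1) / N) = 1 by field_simp, rpow_one]
      _ ≤ (s + ξ ^ N / w) ^ ((N - 1) / N) := by
          gcongr
          linarith [rpow_nonneg hs.le (N / (N - 1))]
  rw [GN_eq hw]
  exact (one_le_div hs).mpr hs_le

lemma one_sub_le_GN {N ξ w : ℝ} (hN : 1 < N) (hξ : 0 ≤ ξ) (hw : 0 < w)
    (hx : 2 * N ^ (1 / (N - 1)) * w ^ (1 / N) ≤ 1) :
    1 - 2 * N ^ (1 / (N - 1)) * w ^ (1 / N) ≤ GN N ξ w := by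
  set x := 2 * N ^ (1 / (N - 1)) * w ^ (1 / N)
  have hx0 : 0 ≤ x := by positivity
  have hξ1 : 0 < ξ + 1 := by linarith
  rcases le_or_gt ξ x with hξx | hxξ
  · calc 1 - x ≤ (ξ + 1)⁻¹ := by
          rw [← one_div, le_div_iff₀ hξ1]
          nlinarith
      _ ≤ GN N ξ w := inv_add_one_le_GN hN.le hξ hw
  · calc 1 - x ≤ 1 := by linarith
      _ ≤ GN N ξ w := one_le_GN hN hξ hw (by
          rw [le_div_iff₀ hξ1]
          nlinarith)

lemma mul_le_modelProfile {N D v b : ℝ} (hN : 0 < N) (hD : 0 < D) (hv : 0 < v) (hv2 : v ≤ 1 / 2)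
    (hb : ∀ ξ, 0 ≤ ξ → b ≤ GN N ξ v) : N / D * v ^ (1 - 1 / N) * b ≤ modelProfile N D v := by
  rw [modelProfile, mul_assoc]
  gcongr
  refine le_csInf ⟨_, 0, le_rfl, rfl⟩ ?_
  rintro _ ⟨ξ, hξ, rfl⟩
  rw [min_eq_left (by linarith), max_eq_right (by linarith)]
  have hterm : v * (ξ + 1) ^ N + (1 - v) * ξ ^ N = v * ((ξ + 1) ^ N + (1 / v - 1) * ξ ^ N) := by
    field_simp
  have hv_inv : 1 ≤ 1 / v := by rw [le_div_iff₀ hv]; linarith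
  have hZ : 0 ≤ (ξ + 1) ^ N + (1 / v - 1) * ξ ^ N :=
    add_nonneg (rpow_nonneg (by linarith) N) (mul_nonneg (by linarith) (rpow_nonneg hξ N))
  have hGN : ((ξ + 1) ^ N + (1 / v - 1) * ξ ^ N) ^ ((N - 1) / N) / ((ξ + 1) ^ N - ξ ^ N) =
      GN N ξ v := rfl
  have hexp : (N - 1) / N = 1 - 1 / N := by field_simp
  rw [hterm, mul_rpow hv.le hZ, mul_div_assoc, hGN, hexp]
  gcongr
  exact hb ξ hξ

/-- Lemma 4.2 (Milman estimate): for `N > 1` there are `C > 0` and `w̄ ∈ (0, 1/2)`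
such that for all `D > 0` and `w ∈ (0, w̄]`,
`𝓘_{N,D}(w) ≥ (N/D) w^{1-1/N} (1 - C w^{1/N})`; equivalently
`inf_{ξ ≥ 0} G_N(ξ, w) ≥ 1 - C w^{1/N}`. -/
theorem milman_lower_estimate (N : ℝ) (hN : 1 < N) :
    ∃ C : ℝ, 0 < C ∧ ∃ wbar : ℝ, 0 < wbar ∧ wbar < 1 / 2 ∧
      ∀ D : ℝ, 0 < D → ∀ w : ℝ, 0 < w → w ≤ wbar →
        (N / D) * w ^ (1 - 1 / N) * (1 - C * w ^ (1 / N)) ≤ modelProfile N D w ∧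
        1 - C * w ^ (1 / N) ≤ sInf {y : ℝ | ∃ ξ : ℝ, 0 ≤ ξ ∧ y = GN N ξ w} := by
  have hN0 : 0 < N := by linarith
  set C := 2 * N ^ (1 / (N - 1))
  have hC : 2 ≤ C := by
    have := one_le_rpow hN.le (div_nonneg zero_le_one (by linarith : (0 : ℝ) ≤ N - 1))
    linarith
  have hwbar : C ^ (-N) < 1 / 2 :=
    calc C ^ (-N) ≤ 2 ^ (-N) := rpow_le_rpow_of_nonpos two_pos hC (by linarith)
      _ < 2 ^ (-1 : ℝ) := rpow_lt_rpow_of_exponent_lt one_lt_two (by linarith)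
      _ = 1 / 2 := by rw [rpow_neg_one, one_div]
  refine ⟨C, by linarith, C ^ (-N), by positivity, hwbar, fun D hD w hw hwC => ?_⟩
  have hx : C * w ^ (1 / N) ≤ 1 :=
    calc C * w ^ (1 / N) ≤ C * (C ^ (-N)) ^ (1 / N) := by gcongr
      _ = 1 := by
        rw [← rpow_mul (by linarith), neg_mul, mul_one_div_cancel hN0.ne', rpow_neg_one,
          mul_inv_cancel₀ (by linarith)]
  have hG (ξ : ℝ) (hξ : 0 ≤ ξ) : 1 - C * w ^ (1 / N) ≤ GN N ξ w := one_sub_le_GN hN hξ hw hx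
  exact ⟨mul_le_modelProfile hN0 hD hw (by linarith) hG,
    le_csInf ⟨_, 0, le_rfl, rfl⟩ (by rintro _ ⟨ξ, hξ, rfl⟩; exact hG ξ hξ)⟩
end
end

section
/- Fix a real number N > 1, D > 0, ξ ≥ 0, and v ∈ (0,1). For every interval set E ⊆ [0,D] with ∫_E h_{N,D}(ξ,x) dx = v, the weighted perimeter satisfies P_{h_{N,D}(ξ,·)}(E) ≥ h_{N,D}(ξ, r_{N,D}(ξ, min{v, 1−v})). Moreover, equality holds only if, up to a Lebesgue-null set, E = [0, r_{N,D}(ξ,v)] in case v ≤ 1/2, or E = [r_{N,D}(ξ,1−v), D] in case v ≥ 1/2. -/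
open MeasureTheory
open scoped Classical

noncomputable section

/-- The model density `h_{N,D}(ξ, ·)` on `[0, D]`. -/
def modelDensity (N D ξ x : ℝ) : ℝ :=
  (N / D ^ N) * (x + ξ * D) ^ (N - 1) / ((ξ + 1) ^ N - ξ ^ N)

/-- The radius `r_{N,D}(ξ, v)`, the unique `r` with `∫_0^r h_{N,D}(ξ, x) dx = v`. -/
def modelRadius (N D ξ v : ℝ) : ℝ :=
  D * ((v * (1 + ξ) ^ N + (1 - v) * ξ ^ N) ^ (1 / N) - ξ)

/-- A decomposition of an "interval set" `E ⊆ [0, D']`: up to a Lebesgue-null set, `E` is an at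
most countable union of pairwise separated open intervals (degenerate intervals `a i = b i`
are allowed, so that finite families are covered); the summability field expresses that the
perimeter of `E` with respect to the density `h` is a (finite) real number. -/
structure IntervalDecomp (D' : ℝ) (h : ℝ → ℝ) (E : Set ℝ) where
  a : ℕ → ℝ
  b : ℕ → ℝ
  nonneg : ∀ i, 0 ≤ a i
  le : ∀ i, a i ≤ b i
  le_top : ∀ i, b i ≤ D'
  sep : ∀ i j, i ≠ j → b i ≤ a j ∨ b j ≤ a i
  aeEq : E =ᵐ[volume] ⋃ i, Set.Ioo (a i) (b i)
  summablePerim : Summable fun i =>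
    (if a i < b i ∧ a i ≠ 0 then h (a i) else 0) +
    (if a i < b i ∧ b i ≠ D' then h (b i) else 0)

/-- The weighted perimeter `P_h(E) = Σ_{i : a_i ≠ 0} h(a_i) + Σ_{i : b_i ≠ D'} h(b_i)`
of an interval set, computed from a decomposition. -/
def IntervalDecomp.perim {D' : ℝ} {h : ℝ → ℝ} {E : Set ℝ}
    (d : IntervalDecomp D' h E) : ℝ :=
  ∑' i, ((if d.a i < d.b i ∧ d.a i ≠ 0 then h (d.a i) else 0) +
         (if d.a i < d.b i ∧ d.b i ≠ D' then h (d.b i) else 0))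

/-!
The density `h = h_{N,D}(ξ, ·)` is continuous, strictly increasing, and positive on `(0, D]`;
`r(w)` is the point where the `h`-mass of `(0, r(w))` equals `w`. If an interval `(a, D)` of `E`
reaches `D`, its mass is at most `v`, so `a ≥ r(1 - v) > 0` and `P(E) ≥ h(a) ≥ h(r(1 - v))`.
Otherwise every right endpoint `b` contributes `h(b)`, hence by continuity so does their supremum
`t`; as `E ⊆ (0, t)`, `t ≥ r(v)` and `P(E) ≥ h(r(v))`. For equality, strict monotonicity of `h`
pins `a` to `r(1 - v)` (resp. `t` to `r(v)`); in the first case any further interval would add a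
positive term, in the second `E ⊆ (0, r(v))` carries the full mass of an interval where `h > 0`.
-/

open Set

theorem ae_eq_of_subset_of_setIntegral_eq {α : Type*} [MeasurableSpace α] {μ : Measure α}
    {f : α → ℝ} {s t : Set α} (hst : s ⊆ t) (hs : MeasurableSet s) (ht : MeasurableSet t)
    (hf : IntegrableOn f t μ) (hpos : ∀ x ∈ t, 0 < f x)
    (heq : ∫ x in s, f x ∂μ = ∫ x in t, f x ∂μ) : s =ᵐ[μ] t := by
  have hzero : ∫ x in t \ s, f x ∂μ = 0 := by rw [setIntegral_sdiff hs hf hst, heq, sub_self]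
  have hnonneg : 0 ≤ᵐ[μ.restrict (t \ s)] f :=
    (ae_restrict_iff' (ht.diff hs)).2 (.of_forall fun x hx => (hpos x hx.1).le)
  have hnull := (setIntegral_pos_iff_support_of_nonneg_ae hnonneg (hf.mono_set sdiff_subset)).not.1
    hzero.not_gt
  rw [not_lt, nonpos_iff_eq_zero, inter_eq_right.2 (show t \ s ⊆ Function.support f from
    fun x hx => Function.mem_support.2 (hpos x hx.1).ne')] at hnull
  exact ae_eq_set.2 ⟨by rw [sdiff_eq_empty.2 hst, measure_empty], hnull⟩

namespace IntervalDecomp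

variable {D' : ℝ} {h : ℝ → ℝ} {E : Set ℝ} (d : IntervalDecomp D' h E)

def perimTerm (i : ℕ) : ℝ :=
  (if d.a i < d.b i ∧ d.a i ≠ 0 then h (d.a i) else 0) +
    (if d.a i < d.b i ∧ d.b i ≠ D' then h (d.b i) else 0)

theorem summable_perimTerm : Summable d.perimTerm := d.summablePerim

theorem perim_eq_tsum : d.perim = ∑' i, d.perimTerm i := rfl

theorem b_nonneg (i : ℕ) : 0 ≤ d.b i := (d.nonneg i).trans (d.le i)

theorem measurableSet_iUnion_Ioo : MeasurableSet (⋃ i, Ioo (d.a i) (d.b i)) :=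
  (isOpen_iUnion fun _ => isOpen_Ioo).measurableSet

theorem iUnion_Ioo_subset_Icc : ⋃ i, Ioo (d.a i) (d.b i) ⊆ Icc 0 D' :=
  iUnion_subset fun i _ hx => ⟨(d.nonneg i).trans hx.1.le, hx.2.le.trans (d.le_top i)⟩

variable {d}

theorem perimTerm_nonneg (hh : ∀ x ∈ Icc 0 D', 0 ≤ h x) (i : ℕ) : 0 ≤ d.perimTerm i := by
  have ha := hh _ ⟨d.nonneg i, (d.le i).trans (d.le_top i)⟩
  have hb := hh _ ⟨d.b_nonneg i, d.le_top i⟩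
  unfold perimTerm
  apply add_nonneg <;> split_ifs <;> first | assumption | exact le_rfl

theorem perimTerm_le_perim (hh : ∀ x ∈ Icc 0 D', 0 ≤ h x) (i : ℕ) : d.perimTerm i ≤ d.perim :=
  d.summable_perimTerm.le_tsum i fun j _ => perimTerm_nonneg hh j

theorem perimTerm_add_perimTerm_le_perim (hh : ∀ x ∈ Icc 0 D', 0 ≤ h x) {i j : ℕ} (hij : i ≠ j) :
    d.perimTerm i + d.perimTerm j ≤ d.perim := by
  rw [perim_eq_tsum]
  simpa [Finset.sum_pair hij] using
    d.summable_perimTerm.sum_le_tsum {i, j} fun k _ => perimTerm_nonneg hh k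

theorem apply_b_le_perimTerm (hh : ∀ x ∈ Icc 0 D', 0 ≤ h x) {i : ℕ} (hi : d.a i < d.b i)
    (hiD : d.b i ≠ D') : h (d.b i) ≤ d.perimTerm i := by
  have ha := hh _ ⟨d.nonneg i, (d.le i).trans (d.le_top i)⟩
  rw [perimTerm, if_pos (show d.a i < d.b i ∧ d.b i ≠ D' from ⟨hi, hiD⟩)]
  split_ifs <;> linarith

theorem apply_b_le_perim (hh : ∀ x ∈ Icc 0 D', 0 ≤ h x) {i : ℕ} (hi : d.a i < d.b i)
    (hiD : d.b i ≠ D') : h (d.b i) ≤ d.perim :=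
  (apply_b_le_perimTerm hh hi hiD).trans (perimTerm_le_perim hh i)

/-- Any other nondegenerate interval lies to the left of `(a i, D')` and adds `h(b) > 0`. -/
theorem iUnion_Ioo_eq_Ioo_of_perim_le_perimTerm (hh : ∀ x ∈ Icc 0 D', 0 ≤ h x)
    (hpos : ∀ x ∈ Ioc 0 D', 0 < h x) {i : ℕ} (hi : d.a i < d.b i) (hiD : d.b i = D')
    (hP : d.perim ≤ d.perimTerm i) : ⋃ j, Ioo (d.a j) (d.b j) = Ioo (d.a i) D' := by
  have hdegen : ∀ j, j ≠ i → d.b j ≤ d.a j := by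
    intro j hji
    by_contra! hj
    have hji' : d.b j ≤ d.a i :=
      (d.sep j i hji).resolve_right fun hij => by linarith [d.le_top j]
    have hterm : 0 < d.perimTerm j :=
      (hpos _ ⟨(d.nonneg j).trans_lt hj, d.le_top j⟩).trans_le
        (apply_b_le_perimTerm hh hj (by linarith))
    linarith [perimTerm_add_perimTerm_le_perim (d := d) hh hji]
  ext x
  simp only [mem_iUnion]
  constructor
  · rintro ⟨j, hx⟩
    obtain rfl : j = i := by
      by_contra hji
      exact (hx.1.trans hx.2).not_ge (hdegen j hji)
    exact ⟨hx.1, hx.2.trans_eq hiD⟩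
  · intro hx
    exact ⟨i, hx.1, hx.2.trans_eq hiD.symm⟩

theorem exists_iUnion_Ioo_subset_Ioo_apply_le_perim (hh : ∀ x ∈ Icc 0 D', 0 ≤ h x)
    (hc : ContinuousOn h (Icc 0 D')) (hne : ∃ i, d.a i < d.b i)
    (htop : ∀ i, d.a i < d.b i → d.b i ≠ D') :
    ∃ t, 0 < t ∧ ⋃ i, Ioo (d.a i) (d.b i) ⊆ Ioo 0 t ∧ h t ≤ d.perim := by
  set S := d.b '' {i | d.a i < d.b i}
  have hSbdd : BddAbove S := ⟨D', by rintro _ ⟨i, -, rfl⟩; exact d.le_top i⟩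
  have hbS : ∀ i, d.a i < d.b i → d.b i ≤ sSup S := fun i hi => le_csSup hSbdd ⟨i, hi, rfl⟩
  have hSsub : S ⊆ Icc 0 D' ∩ h ⁻¹' Iic d.perim := by
    rintro _ ⟨i, hi, rfl⟩
    exact ⟨⟨d.b_nonneg i, d.le_top i⟩, apply_b_le_perim hh hi (htop i hi)⟩
  have hclosed : IsClosed (Icc 0 D' ∩ h ⁻¹' Iic d.perim) :=
    hc.preimage_isClosed_of_isClosed isClosed_Icc isClosed_Iic
  obtain ⟨i, hi⟩ := hne
  refine ⟨sSup S, (d.nonneg i).trans_lt (hi.trans_le (hbS i hi)), ?_,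
    (hclosed.closure_subset_iff.2 hSsub (csSup_mem_closure ⟨_, i, hi, rfl⟩ hSbdd)).2⟩
  simp only [iUnion_subset_iff]
  intro j x hx
  exact ⟨(d.nonneg j).trans_lt hx.1, hx.2.trans_le (hbS j (hx.1.trans hx.2))⟩

end IntervalDecomp

section Model

variable {N D ξ : ℝ}

theorem modelDensity_normalizer_pos (hN : 0 < N) (hξ : 0 ≤ ξ) : 0 < (ξ + 1) ^ N - ξ ^ N :=
  sub_pos.2 (Real.rpow_lt_rpow hξ (lt_add_one ξ) hN)

theorem modelDensity_nonneg (hN : 0 < N) (hD : 0 < D) (hξ : 0 ≤ ξ) {x : ℝ} (hx : 0 ≤ x) :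
    0 ≤ modelDensity N D ξ x := by
  have := modelDensity_normalizer_pos hN hξ
  unfold modelDensity
  positivity

theorem modelDensity_pos (hN : 0 < N) (hD : 0 < D) (hξ : 0 ≤ ξ) {x : ℝ} (hx : 0 < x) :
    0 < modelDensity N D ξ x := by
  have := modelDensity_normalizer_pos hN hξ
  unfold modelDensity
  positivity

theorem strictMonoOn_modelDensity (hN : 1 < N) (hD : 0 < D) (hξ : 0 ≤ ξ) :
    StrictMonoOn (modelDensity N D ξ) (Ici 0) := by
  intro x (hx : 0 ≤ x) y _ hxy
  have hpow : (x + ξ * D) ^ (N - 1) < (y + ξ * D) ^ (N - 1) :=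
    Real.rpow_lt_rpow (by positivity) (by linarith) (by linarith)
  have := modelDensity_normalizer_pos (zero_lt_one.trans hN) hξ
  have : 0 < N / D ^ N := by positivity
  unfold modelDensity
  gcongr

theorem continuous_modelDensity (hN : 1 ≤ N) : Continuous (modelDensity N D ξ) :=
  (((Real.continuous_rpow_const (sub_nonneg.2 hN)).comp (continuous_add_const _)).const_mul
    _).div_const _

theorem integral_modelDensity_Ioo (hN : 1 ≤ N) (hD : 0 < D) (hξ : 0 ≤ ξ) {s t : ℝ}
    (hst : s ≤ t) :
    ∫ x in Ioo s t, modelDensity N D ξ x =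
      ((t + ξ * D) ^ N - (s + ξ * D) ^ N) / (D ^ N * ((ξ + 1) ^ N - ξ ^ N)) := by
  have := (modelDensity_normalizer_pos (zero_lt_one.trans_le hN) hξ).ne'
  have : D ^ N ≠ 0 := (Real.rpow_pos_of_pos hD N).ne'
  have hderiv : ∀ x ∈ uIcc s t, HasDerivAt
      (fun y => (y + ξ * D) ^ N / (D ^ N * ((ξ + 1) ^ N - ξ ^ N))) (modelDensity N D ξ x) x := by
    intro x _
    refine ((((hasDerivAt_id x).add_const (ξ * D)).rpow_const (Or.inr hN)).div_const
      (D ^ N * ((ξ + 1) ^ N - ξ ^ N))).congr_deriv ?_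
    simp only [modelDensity, id]
    field_simp
  rw [integral_Ioc_eq_integral_Ioo.symm, ← intervalIntegral.integral_of_le hst,
    intervalIntegral.integral_eq_sub_of_hasDerivAt hderiv
      ((continuous_modelDensity hN).intervalIntegrable s t)]
  ring

theorem rpow_le_modelRadius_radicand (hN : 0 < N) (hξ : 0 ≤ ξ) {w : ℝ} (hw : 0 ≤ w) :
    ξ ^ N ≤ w * (1 + ξ) ^ N + (1 - w) * ξ ^ N := by
  have := modelDensity_normalizer_pos hN hξ
  rw [add_comm ξ 1] at this
  nlinarith

theorem modelRadius_nonneg (hN : 0 < N) (hD : 0 < D) (hξ : 0 ≤ ξ) {w : ℝ} (hw : 0 ≤ w) :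
    0 ≤ modelRadius N D ξ w := by
  have hs := rpow_le_modelRadius_radicand hN hξ hw
  have : ξ ≤ (w * (1 + ξ) ^ N + (1 - w) * ξ ^ N) ^ (1 / N) := by
    rw [one_div, Real.le_rpow_inv_iff_of_pos hξ ((by positivity : 0 ≤ ξ ^ N).trans hs) hN]
    exact hs
  unfold modelRadius
  exact mul_nonneg hD.le (sub_nonneg.2 this)

theorem modelRadius_add_mul_rpow (hN : 0 < N) (hD : 0 < D) (hξ : 0 ≤ ξ) {w : ℝ} (hw : 0 ≤ w) :
    (modelRadius N D ξ w + ξ * D) ^ N = D ^ N * (w * (1 + ξ) ^ N + (1 - w) * ξ ^ N) := by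
  have hs := (by positivity : 0 ≤ ξ ^ N).trans (rpow_le_modelRadius_radicand hN hξ hw)
  rw [show modelRadius N D ξ w + ξ * D = D * (w * (1 + ξ) ^ N + (1 - w) * ξ ^ N) ^ (1 / N) by
      unfold modelRadius; ring,
    Real.mul_rpow hD.le (by positivity), one_div, Real.rpow_inv_rpow hs hN.ne']

theorem integral_modelDensity_Ioo_modelRadius (hN : 1 ≤ N) (hD : 0 < D) (hξ : 0 ≤ ξ) {w : ℝ}
    (hw : 0 ≤ w) : ∫ x in Ioo 0 (modelRadius N D ξ w), modelDensity N D ξ x = w := by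
  have hN₀ : 0 < N := zero_lt_one.trans_le hN
  have := (modelDensity_normalizer_pos hN₀ hξ).ne'
  have : D ^ N ≠ 0 := (Real.rpow_pos_of_pos hD N).ne'
  rw [integral_modelDensity_Ioo hN hD hξ (modelRadius_nonneg hN₀ hD hξ hw),
    modelRadius_add_mul_rpow hN₀ hD hξ hw, zero_add, Real.mul_rpow hξ hD.le, add_comm 1 ξ]
  field_simp
  ring

theorem strictMonoOn_integral_modelDensity (hN : 1 ≤ N) (hD : 0 < D) (hξ : 0 ≤ ξ) :
    StrictMonoOn (fun t => ∫ x in Ioo 0 t, modelDensity N D ξ x) (Ici 0) := by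
  intro s (hs : 0 ≤ s) t (ht : 0 ≤ t) hst
  have := modelDensity_normalizer_pos (zero_lt_one.trans_le hN) hξ
  have := Real.rpow_pos_of_pos hD N
  have : (s + ξ * D) ^ N < (t + ξ * D) ^ N :=
    Real.rpow_lt_rpow (by positivity) (by linarith) (by linarith)
  simp only [integral_modelDensity_Ioo hN hD hξ hs, integral_modelDensity_Ioo hN hD hξ ht]
  gcongr

theorem modelRadius_le_iff (hN : 1 ≤ N) (hD : 0 < D) (hξ : 0 ≤ ξ) {w t : ℝ} (hw : 0 ≤ w)
    (ht : 0 ≤ t) : modelRadius N D ξ w ≤ t ↔ w ≤ ∫ x in Ioo 0 t, modelDensity N D ξ x := by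
  conv_rhs => rw [← integral_modelDensity_Ioo_modelRadius hN hD hξ hw]
  exact ((strictMonoOn_integral_modelDensity hN hD hξ).le_iff_le
    (modelRadius_nonneg (zero_lt_one.trans_le hN) hD hξ hw) ht).symm

theorem modelRadius_pos (hN : 1 ≤ N) (hD : 0 < D) (hξ : 0 ≤ ξ) {w : ℝ} (hw : 0 < w) :
    0 < modelRadius N D ξ w := by
  by_contra! h
  have := (modelRadius_le_iff hN hD hξ hw.le le_rfl).1 h
  simp only [Ioo_self, Measure.restrict_empty, integral_zero_measure] at this
  linarith

theorem strictMonoOn_modelRadius (hN : 1 ≤ N) (hD : 0 < D) (hξ : 0 ≤ ξ) :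
    StrictMonoOn (modelRadius N D ξ) (Ici 0) := by
  intro v (hv : 0 ≤ v) w (hw : 0 ≤ w) hvw
  by_contra! h
  have := (modelRadius_le_iff hN hD hξ hw
    (modelRadius_nonneg (zero_lt_one.trans_le hN) hD hξ hv)).1 h
  rw [integral_modelDensity_Ioo_modelRadius hN hD hξ hv] at this
  linarith

theorem strictMonoOn_modelDensity_modelRadius (hN : 1 < N) (hD : 0 < D) (hξ : 0 ≤ ξ) :
    StrictMonoOn (fun w => modelDensity N D ξ (modelRadius N D ξ w)) (Ici 0) :=
  (strictMonoOn_modelDensity hN hD hξ).comp (strictMonoOn_modelRadius hN.le hD hξ)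
    fun _ hw => modelRadius_nonneg (zero_lt_one.trans hN) hD hξ hw

theorem modelRadius_one (hN : 0 < N) (hξ : 0 ≤ ξ) : modelRadius N D ξ 1 = D := by
  simp only [modelRadius, one_mul, sub_self, zero_mul, add_zero, one_div]
  rw [Real.rpow_rpow_inv (by linarith) hN.ne']
  ring

theorem integral_modelDensity_Ioo_add_Ioo_top (hN : 1 ≤ N) (hD : 0 < D) (hξ : 0 ≤ ξ) {a : ℝ}
    (ha : 0 ≤ a) (haD : a ≤ D) :
    (∫ x in Ioo 0 a, modelDensity N D ξ x) + ∫ x in Ioo a D, modelDensity N D ξ x = 1 := by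
  have htotal := integral_modelDensity_Ioo_modelRadius hN hD hξ zero_le_one
  rw [modelRadius_one (zero_lt_one.trans_le hN) hξ] at htotal
  rw [← htotal, integral_modelDensity_Ioo hN hD hξ ha, integral_modelDensity_Ioo hN hD hξ haD,
    integral_modelDensity_Ioo hN hD hξ (ha.trans haD)]
  ring

theorem setIntegral_modelDensity_mono (hN : 1 ≤ N) (hD : 0 < D) (hξ : 0 ≤ ξ) {s t : Set ℝ}
    {c : ℝ} (hst : s ⊆ t) (ht : MeasurableSet t) (htc : t ⊆ Icc 0 c) :
    ∫ x in s, modelDensity N D ξ x ≤ ∫ x in t, modelDensity N D ξ x :=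
  setIntegral_mono_set ((continuous_modelDensity hN).integrableOn_Icc.mono_set htc)
    (ae_restrict_of_forall_mem ht fun _ hx =>
      modelDensity_nonneg (zero_lt_one.trans_le hN) hD hξ (htc hx).1)
    hst.eventuallyLE

end Model

namespace IntervalDecomp

variable {N D ξ v : ℝ} {E : Set ℝ}

theorem model_isoperimetric_of_reaches_top (hN : 1 < N) (hD : 0 < D) (hξ : 0 ≤ ξ) (hv : v < 1)
    (d : IntervalDecomp D (modelDensity N D ξ) E) (hm : ∫ x in E, modelDensity N D ξ x = v)
    {i : ℕ} (hi : d.a i < d.b i) (hiD : d.b i = D) :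
    modelDensity N D ξ (modelRadius N D ξ (1 - v)) ≤ d.perim ∧
      (d.perim = modelDensity N D ξ (modelRadius N D ξ (1 - v)) →
        E =ᵐ[volume] Ioo (modelRadius N D ξ (1 - v)) D) := by
  have hN₀ : 0 < N := zero_lt_one.trans hN
  have hh : ∀ x ∈ Icc 0 D, 0 ≤ modelDensity N D ξ x := fun x hx =>
    modelDensity_nonneg hN₀ hD hξ hx.1
  have hmono := strictMonoOn_modelDensity hN hD hξ
  have hr : 0 ≤ modelRadius N D ξ (1 - v) := modelRadius_nonneg hN₀ hD hξ (by linarith)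
  have hai : modelRadius N D ξ (1 - v) ≤ d.a i := by
    have htail : ∫ x in Ioo (d.a i) D, modelDensity N D ξ x ≤ v := by
      rw [← hm, setIntegral_congr_set d.aeEq]
      exact setIntegral_modelDensity_mono hN.le hD hξ
        (subset_iUnion_of_subset i (Ioo_subset_Ioo_right hiD.ge)) d.measurableSet_iUnion_Ioo
        d.iUnion_Ioo_subset_Icc
    rw [modelRadius_le_iff hN.le hD hξ (by linarith) (d.nonneg i)]
    linarith [integral_modelDensity_Ioo_add_Ioo_top hN.le hD hξ (d.nonneg i)
      (hi.le.trans_eq hiD)]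
  have hterm : d.perimTerm i = modelDensity N D ξ (d.a i) := by
    have ha : d.a i ≠ 0 := ((modelRadius_pos hN.le hD hξ (by linarith)).trans_le hai).ne'
    rw [perimTerm, if_pos (show d.a i < d.b i ∧ d.a i ≠ 0 from ⟨hi, ha⟩),
      if_neg fun h => h.2 hiD, add_zero]
  have hle : modelDensity N D ξ (modelRadius N D ξ (1 - v)) ≤ modelDensity N D ξ (d.a i) :=
    hmono.monotoneOn hr (d.nonneg i) hai
  have hperim : modelDensity N D ξ (d.a i) ≤ d.perim := hterm ▸ perimTerm_le_perim hh i
  refine ⟨hle.trans hperim, fun hP => ?_⟩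
  have ha : d.a i = modelRadius N D ξ (1 - v) :=
    hmono.injOn (d.nonneg i) hr (le_antisymm (hperim.trans hP.le) hle)
  rw [← ha]
  refine d.aeEq.trans (Filter.EventuallyEq.of_eq ?_)
  exact iUnion_Ioo_eq_Ioo_of_perim_le_perimTerm hh
    (fun x hx => modelDensity_pos hN₀ hD hξ hx.1) hi hiD (by rw [hterm, hP, ha])

theorem model_isoperimetric_of_not_reaches_top (hN : 1 < N) (hD : 0 < D) (hξ : 0 ≤ ξ)
    (hv : 0 < v) (d : IntervalDecomp D (modelDensity N D ξ) E)
    (hm : ∫ x in E, modelDensity N D ξ x = v) (htop : ∀ i, d.a i < d.b i → d.b i ≠ D) :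
    modelDensity N D ξ (modelRadius N D ξ v) ≤ d.perim ∧
      (d.perim = modelDensity N D ξ (modelRadius N D ξ v) →
        E =ᵐ[volume] Ioo 0 (modelRadius N D ξ v)) := by
  have hN₀ : 0 < N := zero_lt_one.trans hN
  have hmono := strictMonoOn_modelDensity hN hD hξ
  have hU : ∫ x in ⋃ i, Ioo (d.a i) (d.b i), modelDensity N D ξ x = v :=
    (setIntegral_congr_set d.aeEq).symm.trans hm
  have hne : ∃ i, d.a i < d.b i := by
    by_contra! hdegen
    rw [iUnion_eq_empty.2 fun i => Ioo_eq_empty (hdegen i).not_gt, Measure.restrict_empty,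
      integral_zero_measure] at hU
    linarith
  obtain ⟨t, ht, hUt, htP⟩ := d.exists_iUnion_Ioo_subset_Ioo_apply_le_perim
    (fun x hx => modelDensity_nonneg hN₀ hD hξ hx.1) (continuous_modelDensity hN.le).continuousOn
    hne htop
  have hr : 0 ≤ modelRadius N D ξ v := modelRadius_nonneg hN₀ hD hξ hv.le
  have hrt : modelRadius N D ξ v ≤ t :=
    (modelRadius_le_iff hN.le hD hξ hv.le ht.le).2
      (hU ▸ setIntegral_modelDensity_mono hN.le hD hξ hUt measurableSet_Ioo Ioo_subset_Icc_self)
  refine ⟨(hmono.monotoneOn hr ht.le hrt).trans htP, fun hP => ?_⟩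
  have htr : t ≤ modelRadius N D ξ v := (hmono.le_iff_le ht.le hr).1 (htP.trans hP.le)
  refine d.aeEq.trans (ae_eq_of_subset_of_setIntegral_eq (hUt.trans (Ioo_subset_Ioo_right htr))
    d.measurableSet_iUnion_Ioo measurableSet_Ioo
    ((continuous_modelDensity hN.le).integrableOn_Icc.mono_set Ioo_subset_Icc_self)
    (fun x hx => modelDensity_pos hN₀ hD hξ hx.1) ?_)
  rw [hU, integral_modelDensity_Ioo_modelRadius hN.le hD hξ hv.le]

end IntervalDecomp

theorem model_isoperimetric_inequality_and_rigidity_general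
    (N D ξ v : ℝ) (hN : 1 < N) (hD : 0 < D) (hξ : 0 ≤ ξ)
    (hv : v ∈ Set.Ioo (0:ℝ) 1)
    (E : Set ℝ)
    (d : IntervalDecomp D (modelDensity N D ξ) E)
    (hm : (∫ x in E, modelDensity N D ξ x) = v) :
    modelDensity N D ξ (modelRadius N D ξ (min v (1 - v))) ≤ d.perim ∧
      (d.perim = modelDensity N D ξ (modelRadius N D ξ (min v (1 - v))) →
        (v ≤ 1 / 2 ∧ E =ᵐ[volume] Set.Ioo 0 (modelRadius N D ξ v)) ∨
        (1 / 2 ≤ v ∧ E =ᵐ[volume] Set.Ioo (modelRadius N D ξ (1 - v)) D)) := by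
  obtain ⟨hv0, hv1⟩ := hv
  have hφ := strictMonoOn_modelDensity_modelRadius hN hD hξ
  have hv : v ∈ Ici 0 := hv0.le
  have h1v : 1 - v ∈ Ici 0 := sub_nonneg.2 hv1.le
  have hmin : min v (1 - v) ∈ Ici 0 := mem_Ici.2 (le_min hv h1v)
  by_cases hA : ∃ i, d.a i < d.b i ∧ d.b i = D
  · obtain ⟨i, hi, hiD⟩ := hA
    obtain ⟨hle, hrigid⟩ := d.model_isoperimetric_of_reaches_top hN hD hξ hv1 hm hi hiD
    have hφle := hφ.monotoneOn hmin h1v (min_le_right v (1 - v))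
    refine ⟨hφle.trans hle, fun hP => Or.inr ?_⟩
    have hmin_eq : min v (1 - v) = 1 - v :=
      hφ.injOn hmin h1v (le_antisymm hφle (hle.trans hP.le))
    exact ⟨by linarith [min_eq_right_iff.1 hmin_eq], hrigid (hmin_eq ▸ hP)⟩
  · push Not at hA
    obtain ⟨hle, hrigid⟩ := d.model_isoperimetric_of_not_reaches_top hN hD hξ hv0 hm hA
    have hφle := hφ.monotoneOn hmin hv (min_le_left v (1 - v))
    refine ⟨hφle.trans hle, fun hP => Or.inl ?_⟩
    have hmin_eq : min v (1 - v) = v :=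
      hφ.injOn hmin hv (le_antisymm hφle (hle.trans hP.le))
    exact ⟨by linarith [min_eq_left_iff.1 hmin_eq], hrigid (hmin_eq ▸ hP)⟩

/-- Isoperimetric inequality in the model space, together with the characterization of
equality: optimal sets are `[0, r_{N,D}(ξ,v)]` (if `v ≤ 1/2`) or `[r_{N,D}(ξ,1-v), D]`
(if `v ≥ 1/2`), up to null sets. -/
theorem model_isoperimetric_inequality_and_rigidity
    (N D ξ v : ℝ) (hN : 1 < N) (hD : 0 < D) (hξ : 0 ≤ ξ)
    (hv : v ∈ Set.Ioo (0:ℝ) 1)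
    (E : Set ℝ) (hE : E ⊆ Set.Icc 0 D)
    (d : IntervalDecomp D (modelDensity N D ξ) E)
    (hm : (∫ x in E, modelDensity N D ξ x) = v) :
    modelDensity N D ξ (modelRadius N D ξ (min v (1 - v))) ≤ d.perim ∧
      (d.perim = modelDensity N D ξ (modelRadius N D ξ (min v (1 - v))) →
        (v ≤ 1 / 2 ∧ E =ᵐ[volume] Set.Ioo 0 (modelRadius N D ξ v)) ∨
        (1 / 2 ≤ v ∧ E =ᵐ[volume] Set.Ioo (modelRadius N D ξ (1 - v)) D)) :=
  model_isoperimetric_inequality_and_rigidity_general N D ξ v hN hD hξ hv E d hm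
end
end

section
/- Fix a real number N > 1. For every ε ∈ (0,1) there exist w̄ > 0 and δ̄ > 0 such that for all D ≥ D' > 0, every probability CD(0,N) density h on [0,D'], and every interval set E ⊆ [0,D'] with 0 < m_h(E) ≤ w̄ and Res_h^D(E) ≤ δ̄, one has D' ≥ D·(1 − ε). -/
open MeasureTheory
open scoped Classical

noncomputable section

/-- A `CD(0,N)` density on `[0, D']`: nonnegative on `[0, D']`, positive on `(0, D')`,
and `h^{1/(N-1)}` is concave on `[0, D']`. -/
def IsCDDensity (N D' : ℝ) (h : ℝ → ℝ) : Prop :=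
  (∀ x ∈ Set.Icc (0:ℝ) D', 0 ≤ h x) ∧
  (∀ x ∈ Set.Ioo (0:ℝ) D', 0 < h x) ∧
  ConcaveOn ℝ (Set.Icc (0:ℝ) D') (fun x => h x ^ (1 / (N - 1)))

/-- A probability `CD(0,N)` density on `[0, D']`. -/
def IsProbCDDensity (N D' : ℝ) (h : ℝ → ℝ) : Prop :=
  IsCDDensity N D' h ∧ (∫ x in Set.Icc (0:ℝ) D', h x) = 1

/-!
Write `g = h ^ (1 / (N - 1))`, which is concave, and `F(m) = m ^ (1 - 1 / N) - m`. At an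
interior point `b`, comparing `h` with the model density `(g b + k (x - b)) ^ (N - 1)` given by
a supporting line of `g` yields the isoperimetric inequality `N F(∫₀ᵇ h) ≤ (D' - b) h(b)` for
the segment `[0, b]`, and by reflection `N F(∫ₐ^D' h) ≤ a h(a)` for `[a, D']`. Since `F` is
concave with `F(0) = F(1) = 0`, a piece `(a, b)` of mass `m` has
`F(m) ≤ F(∫ₐ^D' h) + F(∫₀ᵇ h)`, hence `N F(m) ≤ D' (h(a) + h(b))`; summing over the pieces
and using the subadditivity of `m ↦ m ^ (1 - 1 / N)` gives `N F(m_h(E)) ≤ D' P_h(E)`.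
If `m_h(E) ≤ (ε / 4) ^ N`, the left side is at least `(1 - ε / 4) N m_h(E) ^ (1 - 1 / N)`,
whereas a residual at most `ε / 2` means `D P_h(E) ≤ (1 + ε / 2) N m_h(E) ^ (1 - 1 / N)`.
Thus `D (1 - ε / 4) ≤ D' (1 + ε / 2)`, so `D (1 - ε) ≤ D'`.
-/

open Set

lemma ConcaveOn.exists_le_affine_of_mem_interior {S : Set ℝ} {f : ℝ → ℝ} {x : ℝ}
    (hf : ConcaveOn ℝ S f) (hx : x ∈ interior S) :
    ∃ c, ∀ y ∈ S, f y ≤ f x + c * (y - x) := by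
  refine ⟨-derivWithin (-f) (Ioi x) x, fun y hy => ?_⟩
  rcases lt_trichotomy y x with hyx | rfl | hxy
  · have h := (hf.neg.slope_le_leftDeriv_of_mem_interior hy hx hyx).trans
      (hf.neg.leftDeriv_le_rightDeriv_of_mem_interior hx)
    rw [slope_def_field, div_le_iff₀ (sub_pos.2 hyx)] at h
    simp only [Pi.neg_apply] at h
    linarith
  · simp
  · have h := hf.neg.rightDeriv_le_slope_of_mem_interior hx hy hxy
    rw [slope_def_field, le_div_iff₀ (sub_pos.2 hxy)] at h
    simp only [Pi.neg_apply] at h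
    linarith

lemma integral_add_mul_sub_rpow {p : ℝ} (hp : 0 < p) {k : ℝ} (hk : k ≠ 0) (c x₀ s t : ℝ) :
    ∫ u in s..t, (c + k * (u - x₀)) ^ (p - 1) =
      ((c + k * (t - x₀)) ^ p - (c + k * (s - x₀)) ^ p) / (k * p) := by
  rw [intervalIntegral.integral_comp_sub_right (fun u => (c + k * u) ^ (p - 1)),
    intervalIntegral.integral_comp_add_mul (fun u => u ^ (p - 1)) hk,
    integral_rpow (Or.inl (by linarith)), sub_add_cancel, smul_eq_mul]
  field_simp

lemma intervalIntegral_le_of_le_rpow_affine {p c k x₀ s t : ℝ} {f : ℝ → ℝ} (hp : 1 ≤ p)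
    (hk : k ≠ 0) (hst : s ≤ t) (hf : IntervalIntegrable f volume s t)
    (hdom : ∀ u ∈ Icc s t, f u ≤ (c + k * (u - x₀)) ^ (p - 1)) :
    ∫ u in s..t, f u ≤ ((c + k * (t - x₀)) ^ p - (c + k * (s - x₀)) ^ p) / (k * p) := by
  have hcont : Continuous fun u => (c + k * (u - x₀)) ^ (p - 1) :=
    (by fun_prop : Continuous fun u => c + k * (u - x₀)).rpow_const
      fun _ => Or.inr (by linarith)
  rw [← integral_add_mul_sub_rpow (by linarith) hk]
  exact intervalIntegral.integral_mono_on hst hf (hcont.intervalIntegrable _ _) hdom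

lemma rpow_sub_self_le_of_add_add_eq_one {θ x m y : ℝ} (hθ0 : 0 ≤ θ) (hθ1 : θ ≤ 1)
    (hx : 0 ≤ x) (hm : 0 ≤ m) (hy : 0 ≤ y) (hsum : x + m + y = 1) :
    m ^ θ - m ≤ ((x + m) ^ θ - (x + m)) + ((m + y) ^ θ - (m + y)) := by
  obtain rfl : y = 1 - x - m := by linarith
  have hF : ConcaveOn ℝ (Ici 0) (fun u : ℝ => u ^ θ - u) :=
    (Real.concaveOn_rpow hθ0 hθ1).sub (convexOn_id (convex_Ici 0))
  rcases hx.eq_or_lt with rfl | hx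
  · simp [Real.one_rpow]
  -- `x + m` and `m + y` are convex combinations of `m` and `1` with complementary weights.
  have h1m : 0 < 1 - m := by linarith
  have hc1 := hF.2 (mem_Ici.2 hm) (mem_Ici.2 zero_le_one) (div_nonneg hy h1m.le)
    (div_nonneg hx.le h1m.le) (by field_simp; ring)
  have hc2 := hF.2 (mem_Ici.2 hm) (mem_Ici.2 zero_le_one) (div_nonneg hx.le h1m.le)
    (div_nonneg hy h1m.le) (by field_simp; ring)
  have e1 : (1 - x - m) / (1 - m) * m + x / (1 - m) * 1 = x + m := by field_simp; ring
  have e2 : x / (1 - m) * m + (1 - x - m) / (1 - m) * 1 = m + (1 - x - m) := by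
    field_simp; ring
  simp only [smul_eq_mul, e1, e2, Real.one_rpow, sub_self, mul_zero, add_zero] at hc1 hc2
  have e3 : (1 - x - m) / (1 - m) * (m ^ θ - m) + x / (1 - m) * (m ^ θ - m) = m ^ θ - m := by
    field_simp; ring
  linarith

lemma rpow_tsum_le_tsum_rpow {ι : Type*} {f : ι → ℝ} {p : ℝ} (hp0 : 0 < p) (hp1 : p ≤ 1)
    (hf0 : ∀ i, 0 ≤ f i) (hf : Summable f) (hfp : Summable fun i => f i ^ p) :
    (∑' i, f i) ^ p ≤ ∑' i, f i ^ p := by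
  rcases (tsum_nonneg hf0).eq_or_lt with hS | hS
  · rw [← hS, Real.zero_rpow hp0.ne']
    exact tsum_nonneg fun i => Real.rpow_nonneg (hf0 i) p
  calc (∑' i, f i) ^ p = ∑' i, f i * (∑' i, f i) ^ (p - 1) := by
        rw [tsum_mul_right, Real.rpow_sub_one hS.ne', mul_div_cancel₀ _ hS.ne']
    _ ≤ ∑' i, f i ^ p := by
        refine (hf.mul_right _).tsum_le_tsum (fun i => ?_) hfp
        rcases (hf0 i).eq_or_lt with hi | hi
        · rw [← hi, zero_mul, Real.zero_rpow hp0.ne']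
        · calc f i * (∑' i, f i) ^ (p - 1) ≤ f i * f i ^ (p - 1) :=
              mul_le_mul_of_nonneg_left (Real.rpow_le_rpow_of_nonpos hi
                (hf.le_tsum i fun j _ => hf0 j) (by linarith)) hi.le
            _ = f i ^ p := by rw [Real.rpow_sub_one hi.ne', mul_div_cancel₀ _ hi.ne']

/-- The right-hand side of `hmass` is the mass on `[b, b + L]` of the model density
`(G + κ (u - b)) ^ (N - 1)` with `κ = G ^ N / (N v)`, the slope for which the model density
has mass exactly `v` to the left of `b` (for any base point `b`). -/
lemma rpow_sub_self_le_of_one_sub_le {N v G L : ℝ} (hN : 0 < N) (hv : 0 < v) (hG : 0 < G)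
    (hL : 0 ≤ L)
    (hmass : 1 - v ≤ ((G + G ^ N / (N * v) * L) ^ N - G ^ N) / (G ^ N / (N * v) * N)) :
    N * (v ^ (1 - 1 / N) - v) ≤ L * G ^ (N - 1) := by
  have hlin : G + G ^ N / (N * v) * L = G * (1 + L * G ^ (N - 1) / (N * v)) := by
    rw [Real.rpow_sub_one hG.ne']; field_simp
  set s := L * G ^ (N - 1) / (N * v) with hs_def
  have hs : 0 ≤ s := by positivity
  have hGN : 0 < G ^ N := Real.rpow_pos_of_pos hG N
  rw [hlin, Real.mul_rpow hG.le (by positivity)] at hmass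
  have hpow : 1 ≤ v * (1 + s) ^ N := by
    have : (G ^ N * (1 + s) ^ N - G ^ N) / (G ^ N / (N * v) * N) = v * ((1 + s) ^ N - 1) := by
      field_simp
    linarith
  have hroot : 1 ≤ v ^ (1 / N) * (1 + s) := by
    have := Real.rpow_le_rpow zero_le_one hpow (by positivity : 0 ≤ 1 / N)
    rw [Real.one_rpow, Real.mul_rpow hv.le (by positivity), one_div,
      Real.rpow_rpow_inv (by positivity) hN.ne'] at this
    rwa [one_div]
  have hθ : v ^ (1 - 1 / N) ≤ v * (1 + s) := by
    have := mul_le_mul_of_nonneg_left hroot (Real.rpow_nonneg hv.le (1 - 1 / N))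
    rwa [mul_one, ← mul_assoc, ← Real.rpow_add hv, sub_add_cancel, Real.rpow_one] at this
  have hNs : N * (v * s) = L * G ^ (N - 1) := by rw [hs_def]; field_simp
  nlinarith

namespace IsCDDensity

variable {N D' : ℝ} {h : ℝ → ℝ}

lemma integral_nonneg (hh : IsCDDensity N D' h) {x y : ℝ} (hx : 0 ≤ x) (hxy : x ≤ y)
    (hy : y ≤ D') : 0 ≤ ∫ t in x..y, h t :=
  intervalIntegral.integral_nonneg hxy fun u hu => hh.1 u ⟨hx.trans hu.1, hu.2.trans hy⟩

lemma comp_const_sub (hh : IsCDDensity N D' h) : IsCDDensity N D' (fun x => h (D' - x)) := by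
  obtain ⟨hnn, hpos, hconc⟩ := hh
  have hreflect : ⇑(AffineMap.lineMap D' (D' - 1) : ℝ →ᵃ[ℝ] ℝ) = fun u => D' - u :=
    funext fun u => by rw [AffineMap.lineMap_apply_ring']; ring
  refine ⟨fun x hx => hnn _ ⟨by linarith [hx.2], by linarith [hx.1]⟩,
    fun x hx => hpos _ ⟨by linarith [hx.2], by linarith [hx.1]⟩, ?_⟩
  simpa [Function.comp_def, hreflect] using hconc.comp_affineMap (AffineMap.lineMap D' (D' - 1))

end IsCDDensity

namespace IsProbCDDensity

variable {N D' : ℝ} {h : ℝ → ℝ}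

lemma integrableOn (hh : IsProbCDDensity N D' h) : IntegrableOn h (Icc 0 D') := by
  by_contra hint
  have h1 := hh.2
  rw [integral_undef hint] at h1
  exact zero_ne_one h1

lemma intervalIntegrable (hh : IsProbCDDensity N D' h) {x y : ℝ} (hx : x ∈ Icc 0 D')
    (hy : y ∈ Icc 0 D') : IntervalIntegrable h volume x y :=
  (hh.integrableOn.mono_set (uIcc_subset_Icc hx hy)).intervalIntegrable

lemma integral_add_integral_eq_one (hh : IsProbCDDensity N D' h) {x : ℝ} (hx : x ∈ Icc 0 D') :
    (∫ t in 0..x, h t) + ∫ t in x..D', h t = 1 := by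
  have hD' : 0 ≤ D' := hx.1.trans hx.2
  rw [intervalIntegral.integral_add_adjacent_intervals
      (hh.intervalIntegrable (left_mem_Icc.2 hD') hx)
      (hh.intervalIntegrable hx (right_mem_Icc.2 hD')),
    intervalIntegral.integral_of_le hD', ← integral_Icc_eq_integral_Ioc, hh.2]

lemma comp_const_sub (hh : IsProbCDDensity N D' h) (hD' : 0 ≤ D') :
    IsProbCDDensity N D' (fun x => h (D' - x)) := by
  refine ⟨hh.1.comp_const_sub, ?_⟩
  rw [integral_Icc_eq_integral_Ioc, ← intervalIntegral.integral_of_le hD',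
    intervalIntegral.integral_comp_sub_left h D', sub_self, sub_zero,
    intervalIntegral.integral_of_le hD', ← integral_Icc_eq_integral_Ioc, hh.2]

theorem rpow_sub_self_integral_left_le (hN : 1 < N) (hh : IsProbCDDensity N D' h) {b : ℝ}
    (hb : b ∈ Ioc 0 D') :
    N * ((∫ t in 0..b, h t) ^ (1 - 1 / N) - ∫ t in 0..b, h t) ≤ (D' - b) * h b := by
  have hb' : b ∈ Icc 0 D' := Ioc_subset_Icc_self hb
  have h0 : (0 : ℝ) ∈ Icc 0 D' := left_mem_Icc.2 (hb'.1.trans hb'.2)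
  have hD' : D' ∈ Icc 0 D' := right_mem_Icc.2 (hb'.1.trans hb'.2)
  have hsplit := hh.integral_add_integral_eq_one hb'
  rcases hb.2.eq_or_lt with rfl | hbD
  · rw [intervalIntegral.integral_same, add_zero] at hsplit
    simp [hsplit]
  obtain ⟨⟨hnn, hpos, hconc⟩, -⟩ := id hh
  have hN0 : 0 < N := by linarith
  obtain ⟨k, hk⟩ := hconc.exists_le_affine_of_mem_interior (x := b)
    (by rw [interior_Icc]; exact ⟨hb.1, hbD⟩)
  set v := ∫ t in 0..b, h t
  set G := h b ^ (1 / (N - 1))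
  have hpow : ∀ u ∈ Icc 0 D', (h u ^ (1 / (N - 1))) ^ (N - 1) = h u := fun u hu => by
    rw [one_div, Real.rpow_inv_rpow (hnn u hu) (by linarith)]
  have hdom : ∀ κ, ∀ u ∈ Icc 0 D', k * (u - b) ≤ κ * (u - b) →
      h u ≤ (G + κ * (u - b)) ^ (N - 1) := fun κ u hu hκ => by
    rw [← hpow u hu]
    exact Real.rpow_le_rpow (Real.rpow_nonneg (hnn u hu) _) ((hk u hu).trans (by linarith))
      (by linarith)
  have hv : 0 < v := intervalIntegral.intervalIntegral_pos_of_pos_on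
    (hh.intervalIntegrable h0 hb') (fun x hx => hpos x ⟨hx.1, hx.2.trans hbD⟩) hb.1
  have hG : 0 < G := Real.rpow_pos_of_pos (hpos b ⟨hb.1, hbD⟩) _
  -- The mass `v` of `[0, b]` bounds the slope `k` of the supporting line, and the mass `1 - v`
  -- of `[b, D']` is then at most that of the model density with the extremal slope.
  have hk_le : k ≤ G ^ N / (N * v) := by
    rcases le_or_gt k 0 with hk0 | hk0
    · exact hk0.trans (by positivity)
    have hle := intervalIntegral_le_of_le_rpow_affine hN.le hk0.ne' hb.1.le
      (hh.intervalIntegrable h0 hb') fun u hu => hdom k u ⟨hu.1, hu.2.trans hbD.le⟩ le_rfl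
    rw [sub_self, mul_zero, add_zero, le_div_iff₀ (by positivity)] at hle
    have hG0 : 0 ≤ (G + k * (0 - b)) ^ N :=
      Real.rpow_nonneg ((Real.rpow_nonneg (hnn 0 h0) _).trans (hk 0 h0)) _
    rw [le_div_iff₀ (by positivity)]
    linarith
  have hmass := intervalIntegral_le_of_le_rpow_affine hN.le (by positivity) hbD.le
    (hh.intervalIntegrable hb' hD') fun u hu =>
      hdom (G ^ N / (N * v)) u ⟨hb.1.le.trans hu.1, hu.2⟩ (by gcongr; linarith [hu.1])
  rw [sub_self, mul_zero, add_zero, show ∫ t in b..D', h t = 1 - v by linarith] at hmass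
  rw [← hpow b hb']
  exact rpow_sub_self_le_of_one_sub_le hN0 hv hG (by linarith) hmass

theorem rpow_sub_self_integral_right_le (hN : 1 < N) (hh : IsProbCDDensity N D' h) {a : ℝ}
    (ha : a ∈ Ico 0 D') :
    N * ((∫ t in a..D', h t) ^ (1 - 1 / N) - ∫ t in a..D', h t) ≤ a * h a := by
  have := (hh.comp_const_sub (ha.1.trans ha.2.le)).rpow_sub_self_integral_left_le hN
    (b := D' - a) ⟨by linarith [ha.2], by linarith [ha.1]⟩
  rwa [intervalIntegral.integral_comp_sub_left h D', sub_sub_cancel, sub_zero] at this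

theorem rpow_sub_self_integral_le_perim (hN : 1 < N) (hh : IsProbCDDensity N D' h) {a b : ℝ}
    (ha : 0 ≤ a) (hab : a ≤ b) (hb : b ≤ D') :
    N * ((∫ t in a..b, h t) ^ (1 - 1 / N) - ∫ t in a..b, h t) ≤
      D' * ((if a < b ∧ a ≠ 0 then h a else 0) + (if a < b ∧ b ≠ D' then h b else 0)) := by
  have hN0 : 0 < N := by linarith
  have hθ0 : 0 < 1 - 1 / N := by rw [sub_pos, div_lt_one hN0]; exact hN
  rcases hab.eq_or_lt with rfl | hab
  · rw [intervalIntegral.integral_same, Real.zero_rpow hθ0.ne']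
    simp
  have h0 : (0 : ℝ) ∈ Icc 0 D' := ⟨le_rfl, ha.trans (hab.le.trans hb)⟩
  have ha' : a ∈ Icc 0 D' := ⟨ha, hab.le.trans hb⟩
  have hb' : b ∈ Icc 0 D' := ⟨ha.trans hab.le, hb⟩
  have hD' : D' ∈ Icc 0 D' := ⟨h0.2, le_rfl⟩
  have hxm : (∫ t in 0..a, h t) + ∫ t in a..b, h t = ∫ t in 0..b, h t :=
    intervalIntegral.integral_add_adjacent_intervals (hh.intervalIntegrable h0 ha')
      (hh.intervalIntegrable ha' hb')
  have hmy : (∫ t in a..b, h t) + ∫ t in b..D', h t = ∫ t in a..D', h t :=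
    intervalIntegral.integral_add_adjacent_intervals (hh.intervalIntegrable ha' hb')
      (hh.intervalIntegrable hb' hD')
  have hsub := rpow_sub_self_le_of_add_add_eq_one hθ0.le (by simp; positivity)
    (hh.1.integral_nonneg le_rfl ha ha'.2) (hh.1.integral_nonneg ha hab.le hb)
    (hh.1.integral_nonneg hb'.1 hb le_rfl)
    (by rw [add_assoc, hmy, hh.integral_add_integral_eq_one ha'])
  rw [hxm, hmy] at hsub
  have hperim_a : a * h a ≤ D' * (if a < b ∧ a ≠ 0 then h a else 0) := by
    split_ifs with hc
    · exact mul_le_mul_of_nonneg_right ha'.2 (hh.1.1 a ha')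
    · simp [show a = 0 by tauto]
  have hperim_b : (D' - b) * h b ≤ D' * (if a < b ∧ b ≠ D' then h b else 0) := by
    split_ifs with hc
    · exact mul_le_mul_of_nonneg_right (by linarith [hb'.1]) (hh.1.1 b hb')
    · simp [show b = D' by tauto]
  calc N * ((∫ t in a..b, h t) ^ (1 - 1 / N) - ∫ t in a..b, h t)
      ≤ N * ((∫ t in a..D', h t) ^ (1 - 1 / N) - ∫ t in a..D', h t) +
          N * ((∫ t in 0..b, h t) ^ (1 - 1 / N) - ∫ t in 0..b, h t) := by
        linarith [mul_le_mul_of_nonneg_left hsub hN0.le]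
    _ ≤ a * h a + (D' - b) * h b :=
        add_le_add (hh.rpow_sub_self_integral_right_le hN ⟨ha, hab.trans_le hb⟩)
          (hh.rpow_sub_self_integral_left_le hN ⟨ha.trans_lt hab, hb⟩)
    _ ≤ _ := by rw [mul_add]; exact add_le_add hperim_a hperim_b

end IsProbCDDensity

namespace IntervalDecomp

variable {N D' : ℝ} {h : ℝ → ℝ} {E : Set ℝ}

lemma hasSum_integral (d : IntervalDecomp D' h E) {f : ℝ → ℝ} (hf : IntegrableOn f (Icc 0 D')) :
    HasSum (fun i => ∫ t in d.a i..d.b i, f t) (∫ x in E, f x) := by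
  have hsub : (⋃ i, Ioo (d.a i) (d.b i)) ⊆ Icc 0 D' := iUnion_subset fun i _ hx =>
    ⟨(d.nonneg i).trans hx.1.le, hx.2.le.trans (d.le_top i)⟩
  have hdisj : Pairwise (Function.onFun Disjoint fun i => Ioo (d.a i) (d.b i)) :=
    fun i j hij => Ioo_disjoint_Ioo.2 <| by
      rcases d.sep i j hij with hs | hs
      · exact (min_le_left _ _).trans (hs.trans (le_max_right _ _))
      · exact (min_le_right _ _).trans (hs.trans (le_max_left _ _))
  rw [setIntegral_congr_set d.aeEq]
  simp_rw [intervalIntegral.integral_of_le (d.le _), integral_Ioc_eq_integral_Ioo]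
  exact hasSum_integral_iUnion (fun _ => measurableSet_Ioo) hdisj (hf.mono_set hsub)

theorem rpow_sub_self_le_perim (hN : 1 < N) (hh : IsProbCDDensity N D' h)
    (d : IntervalDecomp D' h E) :
    N * ((∫ x in E, h x) ^ (1 - 1 / N) - ∫ x in E, h x) ≤ D' * d.perim := by
  have hN0 : 0 < N := by linarith
  have hθ0 : 0 < 1 - 1 / N := by rw [sub_pos, div_lt_one hN0]; exact hN
  set m := fun i => ∫ t in d.a i..d.b i, h t
  set p := fun i => (if d.a i < d.b i ∧ d.a i ≠ 0 then h (d.a i) else 0) +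
    (if d.a i < d.b i ∧ d.b i ≠ D' then h (d.b i) else 0)
  have hm := d.hasSum_integral hh.integrableOn
  have hm0 : ∀ i, 0 ≤ m i := fun i => hh.1.integral_nonneg (d.nonneg i) (d.le i) (d.le_top i)
  have hpiece : ∀ i, N * (m i ^ (1 - 1 / N) - m i) ≤ D' * p i := fun i =>
    hh.rpow_sub_self_integral_le_perim hN (d.nonneg i) (d.le i) (d.le_top i)
  have hmθ : Summable fun i => m i ^ (1 - 1 / N) := by
    refine (hm.summable.add ((d.summablePerim.mul_left D').div_const N)).of_nonneg_of_le
      (fun i => Real.rpow_nonneg (hm0 i) _) fun i => ?_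
    have : m i ^ (1 - 1 / N) - m i ≤ D' * p i / N :=
      (le_div_iff₀ hN0).2 (by linarith [hpiece i])
    exact (sub_le_iff_le_add').1 this
  calc N * ((∫ x in E, h x) ^ (1 - 1 / N) - ∫ x in E, h x)
      ≤ N * (∑' i, m i ^ (1 - 1 / N) - ∑' i, m i) := by
        rw [← hm.tsum_eq]
        gcongr
        exact rpow_tsum_le_tsum_rpow hθ0 (by simp; positivity) hm0 hm.summable hmθ
    _ = ∑' i, N * (m i ^ (1 - 1 / N) - m i) := by
        rw [tsum_mul_left, hmθ.tsum_sub hm.summable]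
    _ ≤ ∑' i, D' * p i :=
        ((hmθ.sub hm.summable).mul_left N).tsum_le_tsum hpiece (d.summablePerim.mul_left D')
    _ = D' * d.perim := tsum_mul_left

end IntervalDecomp

lemma mul_one_sub_le_of_residual_le {N ε D D' M P : ℝ} (hN : 0 < N) (hε : 0 < ε)
    (hD' : 0 ≤ D') (hDD' : D' ≤ D) (hM : 0 < M) (hMw : M ≤ (ε / 4) ^ N)
    (hiso : N * (M ^ (1 - 1 / N) - M) ≤ D' * P)
    (hres : D * P / (N * M ^ (1 - 1 / N)) - 1 ≤ ε / 2) :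
    D * (1 - ε) ≤ D' := by
  set μ := M ^ (1 - 1 / N)
  have hμ : 0 < N * μ := mul_pos hN (Real.rpow_pos_of_pos hM _)
  have hroot : M ^ (1 / N) ≤ ε / 4 := by
    calc M ^ (1 / N) ≤ ((ε / 4) ^ N) ^ (1 / N) := by gcongr
      _ = ε / 4 := by rw [one_div, Real.rpow_rpow_inv (by positivity) hN.ne']
  have hMμ : M ≤ μ * (ε / 4) := by
    calc M = μ * M ^ (1 / N) := by rw [← Real.rpow_add hM, sub_add_cancel, Real.rpow_one]
      _ ≤ μ * (ε / 4) := by gcongr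
  have hlow : (1 - ε / 4) * (N * μ) ≤ D' * P := by nlinarith
  have hup : D * P ≤ (1 + ε / 2) * (N * μ) := (div_le_iff₀ hμ).1 (by linarith)
  have hcmp : D * (1 - ε / 4) ≤ D' * (1 + ε / 2) := by
    refine le_of_mul_le_mul_right ?_ hμ
    nlinarith [mul_le_mul_of_nonneg_left hlow (hD'.trans hDD'), mul_le_mul_of_nonneg_left hup hD']
  nlinarith [mul_nonneg (hD'.trans hDD') (mul_nonneg hε.le hε.le)]

/-- Proposition 5.3 (almost rigidity of the diameter): if `m_h(E)` and the `D`-residual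
`Res_h^D(E) = D P_h(E) / (N m_h(E)^{1-1/N}) - 1` are small enough, then `D' ≥ D (1 - ε)`. -/
theorem almost_rigidity_diameter (N : ℝ) (hN : 1 < N) :
    ∀ ε : ℝ, ε ∈ Set.Ioo (0:ℝ) 1 →
      ∃ wbar : ℝ, 0 < wbar ∧ ∃ δbar : ℝ, 0 < δbar ∧
        ∀ D D' : ℝ, 0 < D' → D' ≤ D →
        ∀ h : ℝ → ℝ, IsProbCDDensity N D' h →
        ∀ E : Set ℝ, E ⊆ Set.Icc 0 D' →
        ∀ d : IntervalDecomp D' h E,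
          0 < (∫ x in E, h x) → (∫ x in E, h x) ≤ wbar →
          D * d.perim / (N * (∫ x in E, h x) ^ (1 - 1 / N)) - 1 ≤ δbar →
          D * (1 - ε) ≤ D' := by
  rintro ε ⟨hε, -⟩
  refine ⟨(ε / 4) ^ N, by positivity, ε / 2, by positivity, ?_⟩
  intro D D' hD' hDD' h hh E _ d hM hMw hres
  exact mul_one_sub_le_of_residual_le (by linarith) hε hD'.le hDD' hM hMw
    (d.rpow_sub_self_le_perim hN hh) hres
end
end

section
/- Fix a real number N > 1. For every ε > 0 there exist w̄ > 0 and δ̄ > 0 such that for all D ≥ D' > 0, every probability CD(0,N) density h on [0,D'], and every w ∈ (0, w̄] with Res_h^D(w) ≤ δ̄, one has (1 − ε)·D·w^{1/N} ≤ r_h(w) ≤ (1 + ε)·D·w^{1/N}. -/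
/-!
Write `g = h^{1/(N-1)}`, concave and nonnegative. Since `g(x)/x` decreases, so does
`h(x)/x^{N-1}`, and comparing the mass `w` before `r` with the mass `1 - w` after it gives
`r ≤ D' w^{1/N}`.

For the lower bound, `h` lies below the cone `(σ (t - r + A))^{N-1}` built on a supporting line of
`g` at `r`, with `A ≥ r`. A small residual makes `h(r)` small, so the mass `1 - w` to the right of
`r` can only be carried if the cone is steep: its apex distance `A` is at most about `D w^{1/N}`.
The mass `w` to the left of `r` then forces `r` itself to be at least about `D w^{1/N}`.
-/

open MeasureTheory

noncomputable section

open Set Filter Topology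

theorem ConcaveOn.exists_le_add_mul_sub {S : Set ℝ} {g : ℝ → ℝ} {x : ℝ} (hg : ConcaveOn ℝ S g)
    (hx : x ∈ interior S) : ∃ σ, ∀ y ∈ S, g y ≤ g x + σ * (y - x) := by
  refine ⟨-derivWithin (-g) (Iio x) x, fun y hy => ?_⟩
  rcases lt_trichotomy y x with hyx | rfl | hxy
  · have := hg.neg.slope_le_leftDeriv_of_mem_interior hy hx hyx
    rw [slope_def_field, div_le_iff₀ (sub_pos.2 hyx)] at this
    simp only [Pi.neg_apply] at this
    linarith
  · simp
  · have := (hg.neg.leftDeriv_le_rightDeriv_of_mem_interior hx).trans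
      (hg.neg.rightDeriv_le_slope_of_mem_interior hx hy hxy)
    rw [slope_def_field, le_div_iff₀ (sub_pos.2 hxy)] at this
    simp only [Pi.neg_apply] at this
    linarith

theorem ConcaveOn.mul_apply_le_mul_apply {L x y : ℝ} {g : ℝ → ℝ} (hg : ConcaveOn ℝ (Icc 0 L) g)
    (hg0 : 0 ≤ g 0) (hx : 0 ≤ x) (hxy : x ≤ y) (hyL : y ≤ L) : x * g y ≤ y * g x := by
  rcases hx.trans hxy |>.eq_or_lt with rfl | hy
  · rw [le_antisymm hxy hx]
  have hconv := hg.2 ⟨hx.trans hxy, hyL⟩ ⟨le_rfl, (hx.trans hxy).trans hyL⟩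
    (div_nonneg hx hy.le) (sub_nonneg.2 ((div_le_one hy).2 hxy)) (add_sub_cancel _ _)
  simp only [smul_eq_mul, mul_zero, add_zero, div_mul_cancel₀ _ hy.ne'] at hconv
  have := mul_nonneg (sub_nonneg.2 ((div_le_one hy).2 hxy)) hg0
  have key : x / y * g y ≤ g x := by linarith
  rwa [div_mul_eq_mul_div, div_le_iff₀ hy, mul_comm (g x)] at key

theorem integral_mul_sub_rpow {σ t₀ a b p : ℝ} (hσ : 0 ≤ σ) (ha : t₀ ≤ a) (hb : t₀ ≤ b)
    (hp : -1 < p) :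
    ∫ t in a..b, (σ * (t - t₀)) ^ p =
      σ ^ p * ((b - t₀) ^ (p + 1) - (a - t₀) ^ (p + 1)) / (p + 1) := by
  have hmul : EqOn (fun t => (σ * (t - t₀)) ^ p) (fun t => σ ^ p * (t - t₀) ^ p) (uIcc a b) :=
    fun t ht => Real.mul_rpow hσ (sub_nonneg.2 ((le_min ha hb).trans ht.1))
  rw [intervalIntegral.integral_congr hmul, intervalIntegral.integral_const_mul,
    intervalIntegral.integral_comp_sub_right (fun t => t ^ p), integral_rpow (Or.inl hp)]
  ring

theorem integral_le_of_le_mul_sub_rpow {f : ℝ → ℝ} {σ t₀ a b p : ℝ} (hσ : 0 ≤ σ) (ha : t₀ ≤ a)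
    (hab : a ≤ b) (hp : 0 ≤ p) (hf : IntervalIntegrable f volume a b)
    (hle : ∀ t ∈ Icc a b, f t ≤ (σ * (t - t₀)) ^ p) :
    ∫ t in a..b, f t ≤ σ ^ p * ((b - t₀) ^ (p + 1) - (a - t₀) ^ (p + 1)) / (p + 1) := by
  rw [← integral_mul_sub_rpow hσ ha (ha.trans hab) (by linarith)]
  refine intervalIntegral.integral_mono_on hab hf (ContinuousOn.intervalIntegrable ?_) hle
  exact ContinuousOn.rpow_const (by fun_prop) fun _ _ => Or.inr hp

/-! Let `(σ (t - r + A))^{N-1}` be the cone above `h` and `u = w^{1/N}`. The lemmas below work in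
the units `a = A / (D u)`, `ρ = r / (D u)`, `K = σ^{N-1} D^N / N`, in which `K a^{N-1}` is the
residual plus one and the model cone has `K = a = ρ = 1`. When the residual and `u` are at most
`η`, the mass to the right of `r` gives `a ≤ apexBound₀ N η` and then `a ≤ apexBound N η`, and the
mass to its left gives `ρ ≥ radiusBound N η`; `apexBound` and `radiusBound` tend to `1` at `0`. -/

def apexBound₀ (N η : ℝ) : ℝ :=
  (((1 - η ^ N) / (N * (1 + η))) ^ (N - 1)⁻¹ - η)⁻¹

def apexBound (N η : ℝ) : ℝ :=
  ((1 + η) * (1 + η * apexBound₀ N η) ^ N / (1 - η ^ N)) ^ (N - 1)⁻¹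

def radiusBound (N η : ℝ) : ℝ :=
  (1 + η)⁻¹ - (apexBound N η ^ (N - 1) * (apexBound N η - (1 + η)⁻¹)) ^ N⁻¹

section ConeBounds

variable {N η K a ρ u : ℝ}

theorem le_apexBound₀ (hN : 1 < N) (hη : 0 < apexBound₀ N η) (hη1 : η ≤ 1)
    (ha : 0 < a) (hu : 0 < u) (huη : u ≤ η)
    (hres : K * a ^ (N - 1) ≤ 1 + η) (hright' : 1 - u ^ N ≤ N * K * (1 + a * u) ^ (N - 1)) :
    a ≤ apexBound₀ N η := by
  have hN0 : 0 < N := by linarith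
  have hN1 : 0 < N - 1 := by linarith
  have hη0 : 0 ≤ η := hu.le.trans huη
  have hηN : η ^ N ≤ 1 := Real.rpow_le_one hη0 hη1 hN0.le
  have hau : 0 ≤ 1 + a * u := by positivity
  have hmass : (1 - η ^ N) / (N * (1 + η)) ≤ ((1 + a * u) / a) ^ (N - 1) := by
    rw [Real.div_rpow hau ha.le, div_le_div_iff₀ (by positivity) (by positivity)]
    have huN : u ^ N ≤ η ^ N := Real.rpow_le_rpow hu.le huη hN0.le
    calc (1 - η ^ N) * a ^ (N - 1) ≤ (1 - u ^ N) * a ^ (N - 1) := by gcongr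
      _ ≤ N * K * (1 + a * u) ^ (N - 1) * a ^ (N - 1) := by gcongr
      _ = N * (K * a ^ (N - 1)) * (1 + a * u) ^ (N - 1) := by ring
      _ ≤ N * (1 + η) * (1 + a * u) ^ (N - 1) := by gcongr
      _ = (1 + a * u) ^ (N - 1) * (N * (1 + η)) := by ring
  have hroot := (Real.rpow_inv_le_iff_of_pos (by
    have : 0 ≤ 1 - η ^ N := by linarith
    positivity) (by positivity) hN1).2 hmass
  have hpos : 0 < ((1 - η ^ N) / (N * (1 + η))) ^ (N - 1)⁻¹ - η := inv_pos.1 hη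
  rw [apexBound₀, le_inv_comm₀ ha hpos]
  rw [show (1 + a * u) / a = a⁻¹ + u by field_simp] at hroot
  linarith

theorem le_apexBound (hN : 1 < N) (hη1 : η < 1) (ha : 0 < a) (hu : 0 < u) (huη : u ≤ η)
    (ha₀ : a ≤ apexBound₀ N η)
    (hres : K * a ^ (N - 1) ≤ 1 + η) (hright : 1 - u ^ N ≤ K * (1 + a * u) ^ N) :
    a ≤ apexBound N η := by
  have hN0 : 0 < N := by linarith
  have hN1 : 0 < N - 1 := by linarith
  have hη0 : 0 ≤ η := hu.le.trans huη
  have hηN : 0 < 1 - η ^ N := sub_pos.2 (Real.rpow_lt_one hη0 hη1 hN0)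
  have huN : u ^ N ≤ η ^ N := Real.rpow_le_rpow hu.le huη hN0.le
  have hb : 0 ≤ apexBound₀ N η := ha.le.trans ha₀
  rw [apexBound, Real.le_rpow_inv_iff_of_pos ha.le (by positivity) hN1, le_div_iff₀ hηN]
  calc a ^ (N - 1) * (1 - η ^ N) ≤ a ^ (N - 1) * (1 - u ^ N) := by gcongr
    _ ≤ a ^ (N - 1) * (K * (1 + a * u) ^ N) := by gcongr
    _ = K * a ^ (N - 1) * (1 + a * u) ^ N := by ring
    _ ≤ (1 + η) * (1 + η * apexBound₀ N η) ^ N := by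
      have hau : u * a ≤ η * apexBound₀ N η := mul_le_mul huη ha₀ ha.le hη0
      exact mul_le_mul hres (Real.rpow_le_rpow (by positivity) (by linarith) hN0.le)
        (by positivity) (by linarith)

theorem radiusBound_le (hN : 1 < N) (hK : 0 < K) (ha : 0 < a) (hρa : ρ ≤ a) (hη : 0 ≤ η)
    (haη : a ≤ apexBound N η)
    (hres : K * a ^ (N - 1) ≤ 1 + η) (hleft : 1 ≤ K * (a ^ N - (a - ρ) ^ N)) :
    radiusBound N η ≤ ρ := by
  have hN0 : 0 < N := by linarith
  have hη1 : 0 < 1 + η := by linarith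
  have hdiff : 0 ≤ a ^ N - (a - ρ) ^ N := by
    by_contra h
    nlinarith [mul_neg_of_pos_of_neg hK (not_le.1 h)]
  have hsplit : a ^ N = a ^ (N - 1) * a := by
    rw [Real.rpow_sub_one ha.ne', div_mul_cancel₀ _ ha.ne']
  have hcap : (a - ρ) ^ N ≤ a ^ (N - 1) * (a - (1 + η)⁻¹) := by
    have : a ^ (N - 1) ≤ (1 + η) * (a ^ N - (a - ρ) ^ N) := by
      calc a ^ (N - 1) ≤ a ^ (N - 1) * (K * (a ^ N - (a - ρ) ^ N)) :=
            le_mul_of_one_le_right (by positivity) hleft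
        _ = K * a ^ (N - 1) * (a ^ N - (a - ρ) ^ N) := by ring
        _ ≤ (1 + η) * (a ^ N - (a - ρ) ^ N) := by gcongr
    have : a ^ (N - 1) * (1 + η)⁻¹ ≤ a ^ N - (a - ρ) ^ N := by
      rw [← div_eq_mul_inv, div_le_iff₀ hη1]
      linarith
    rw [mul_sub, ← hsplit]
    linarith
  have hgap : 0 ≤ a - (1 + η)⁻¹ := by
    have := (Real.rpow_nonneg (sub_nonneg.2 hρa) N).trans hcap
    exact (mul_nonneg_iff_of_pos_left (by positivity)).1 this
  have hcap' : (a - ρ) ^ N ≤ apexBound N η ^ (N - 1) * (apexBound N η - (1 + η)⁻¹) := by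
    have := Real.rpow_nonneg (ha.le.trans haη) (N - 1)
    exact hcap.trans (by gcongr)
  have hroot := (Real.le_rpow_inv_iff_of_pos (sub_nonneg.2 hρa)
    ((Real.rpow_nonneg (sub_nonneg.2 hρa) N).trans hcap') hN0).2 hcap'
  rw [radiusBound]
  linarith

theorem radiusBound_le_of_cone_bounds (hN : 1 < N) (hη₀ : 0 < apexBound₀ N η) (hη1 : η < 1)
    (hK : 0 < K) (ha : 0 < a) (hρa : ρ ≤ a) (hu : 0 < u) (huη : u ≤ η)
    (hres : K * a ^ (N - 1) ≤ 1 + η) (hleft : 1 ≤ K * (a ^ N - (a - ρ) ^ N))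
    (hright : 1 - u ^ N ≤ K * (1 + a * u) ^ N)
    (hright' : 1 - u ^ N ≤ N * K * (1 + a * u) ^ (N - 1)) :
    radiusBound N η ≤ ρ :=
  have ha₀ := le_apexBound₀ hN hη₀ hη1.le ha hu huη hres hright'
  have ha₁ := le_apexBound hN hη1 ha hu huη ha₀ hres hright
  radiusBound_le hN hK ha hρa (hu.le.trans huη) ha₁ hres hleft

theorem lt_one_sub_rpow_of_apexBound₀_pos (hN : 1 < N) (hη : 0 < apexBound₀ N η) (hη1 : η < 1)
    (hu : 0 < u) (huη : u ≤ η) : (1 + η) * N * u ^ (N - 1) < 1 - u ^ N := by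
  have hN0 : 0 < N := by linarith
  have hN1 : 0 < N - 1 := by linarith
  have hη0 : 0 ≤ η := hu.le.trans huη
  have hηN : 0 < 1 - η ^ N := sub_pos.2 (Real.rpow_lt_one hη0 hη1 hN0)
  have hc := sub_pos.1 (inv_pos.1 hη)
  have hpow := Real.rpow_lt_rpow hη0 hc hN1
  rw [Real.rpow_inv_rpow (by positivity) hN1.ne', lt_div_iff₀ (by positivity)] at hpow
  calc (1 + η) * N * u ^ (N - 1) ≤ (1 + η) * N * η ^ (N - 1) := by
        gcongr
    _ < 1 - η ^ N := by linarith
    _ ≤ 1 - u ^ N := by gcongr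

end ConeBounds

section Continuity

variable {N : ℝ}

theorem continuousAt_apexBound₀ (hN : 1 < N) : ContinuousAt (apexBound₀ N) 0 := by
  have hN0 : 0 < N := by linarith
  have hbase : ContinuousAt (fun η : ℝ => (1 - η ^ N) / (N * (1 + η))) 0 :=
    ((continuousAt_const.sub (Real.continuousAt_rpow_const 0 N (Or.inr hN0.le))).div
      (by fun_prop) (by simp [hN0.ne']))
  refine ((hbase.rpow_const (Or.inl (by simp [Real.zero_rpow hN0.ne', hN0.ne']))).sub
    continuousAt_id).inv₀ ?_
  simp [Real.zero_rpow hN0.ne']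
  positivity

theorem apexBound_zero (hN : 1 < N) : apexBound N 0 = 1 := by
  simp [apexBound, Real.zero_rpow (by linarith : N ≠ 0)]

theorem continuousAt_apexBound (hN : 1 < N) : ContinuousAt (apexBound N) 0 := by
  have hN0 : 0 < N := by linarith
  have hbase : ContinuousAt
      (fun η : ℝ => (1 + η) * (1 + η * apexBound₀ N η) ^ N / (1 - η ^ N)) 0 :=
    ((continuousAt_const.add continuousAt_id).mul
      ((continuousAt_const.add (continuousAt_id.mul (continuousAt_apexBound₀ hN))).rpow_const
        (Or.inr hN0.le))).div
      (continuousAt_const.sub (Real.continuousAt_rpow_const 0 N (Or.inr hN0.le)))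
      (by simp [Real.zero_rpow hN0.ne'])
  exact hbase.rpow_const (Or.inl (by simp [Real.zero_rpow hN0.ne']))

theorem radiusBound_zero (hN : 1 < N) : radiusBound N 0 = 1 := by
  simp [radiusBound, apexBound_zero hN, Real.zero_rpow (by positivity : N⁻¹ ≠ 0)]

theorem continuousAt_radiusBound (hN : 1 < N) : ContinuousAt (radiusBound N) 0 := by
  have hN0 : 0 < N := by linarith
  have hinv : ContinuousAt (fun η : ℝ => (1 + η)⁻¹) 0 :=
    (continuousAt_const.add continuousAt_id).inv₀ (by norm_num)
  exact hinv.sub ((((continuousAt_apexBound hN).rpow_const (Or.inr (by linarith))).mul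
    ((continuousAt_apexBound hN).sub hinv)).rpow_const (Or.inr (by positivity)))

theorem eventually_apexBound₀_pos (hN : 1 < N) : ∀ᶠ η in 𝓝 0, 0 < apexBound₀ N η := by
  have hN0 : 0 < N := by linarith
  refine continuousAt_const.eventually_lt (continuousAt_apexBound₀ hN) ?_
  simp [apexBound₀, Real.zero_rpow hN0.ne']
  positivity

theorem eventually_lt_radiusBound (hN : 1 < N) {ε : ℝ} (hε : 0 < ε) :
    ∀ᶠ η in 𝓝 0, 1 - ε < radiusBound N η :=
  continuousAt_const.eventually_lt (continuousAt_radiusBound hN)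
    (by rw [radiusBound_zero hN]; linarith)

end Continuity

theorem radiusBound_mul_le_of_masses {N η u σ A r D : ℝ} (hN : 1 < N)
    (hη₀ : 0 < apexBound₀ N η) (hη1 : η < 1) (hσ : 0 < σ) (hr : 0 < r) (hrA : r ≤ A) (hD : 0 < D)
    (hu : 0 < u) (huη : u ≤ η) (hres : D * (σ * A) ^ (N - 1) ≤ (1 + η) * N * u ^ (N - 1))
    (hleft : N * u ^ N ≤ σ ^ (N - 1) * (A ^ N - (A - r) ^ N))
    (hright : N * (1 - u ^ N) ≤ σ ^ (N - 1) * (A + D) ^ N)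
    (hright' : 1 - u ^ N ≤ D * (σ * (A + D)) ^ (N - 1)) :
    radiusBound N η * (D * u) ≤ r := by
  have hN0 : 0 < N := by linarith
  have hS : 0 < D * u := mul_pos hD hu
  obtain ⟨a, rfl⟩ : ∃ a, A = a * (D * u) := ⟨A / (D * u), (div_mul_cancel₀ _ hS.ne').symm⟩
  obtain ⟨ρ, rfl⟩ : ∃ ρ, r = ρ * (D * u) := ⟨r / (D * u), (div_mul_cancel₀ _ hS.ne').symm⟩
  obtain ⟨K, hK⟩ : ∃ K, K = σ ^ (N - 1) * D ^ N / N := ⟨_, rfl⟩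
  have hρa : ρ ≤ a := le_of_mul_le_mul_right hrA hS
  have ha : 0 < a := pos_of_mul_pos_left (hr.trans_le hrA) hS.le
  have hau : 0 ≤ 1 + a * u := by positivity
  have hAD : a * (D * u) + D = D * (1 + a * u) := by ring
  have hDN : D ^ N = D ^ (N - 1) * D := by rw [Real.rpow_sub_one hD.ne', div_mul_cancel₀ _ hD.ne']
  have eres : K * a ^ (N - 1) * (N * u ^ (N - 1)) = D * (σ * (a * (D * u))) ^ (N - 1) := by
    rw [Real.mul_rpow hσ.le (by positivity), Real.mul_rpow ha.le hS.le,
      Real.mul_rpow hD.le hu.le, hK, hDN]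
    field_simp
  have eleft : K * (a ^ N - (a - ρ) ^ N) * (N * u ^ N) =
      σ ^ (N - 1) * ((a * (D * u)) ^ N - (a * (D * u) - ρ * (D * u)) ^ N) := by
    rw [← sub_mul, Real.mul_rpow (sub_nonneg.2 hρa) hS.le, Real.mul_rpow ha.le hS.le,
      Real.mul_rpow hD.le hu.le, hK]
    field_simp
  have eright : K * (1 + a * u) ^ N * N = σ ^ (N - 1) * (a * (D * u) + D) ^ N := by
    rw [hAD, Real.mul_rpow hD.le hau, hK]
    field_simp
  have eright' : N * K * (1 + a * u) ^ (N - 1) = D * (σ * (a * (D * u) + D)) ^ (N - 1) := by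
    rw [hAD, Real.mul_rpow hσ.le (by positivity), Real.mul_rpow hD.le hau, hK, hDN]
    field_simp
  refine mul_le_mul_of_nonneg_right (radiusBound_le_of_cone_bounds hN hη₀ hη1
    (by rw [hK]; positivity) ha hρa hu huη ?_ ?_ ?_ (eright' ▸ hright')) hS.le
  · exact le_of_mul_le_mul_right (by linarith) (by positivity : 0 < N * u ^ (N - 1))
  · exact le_of_mul_le_mul_right (by linarith) (by positivity : 0 < N * u ^ N)
  · exact le_of_mul_le_mul_right (by linarith) hN0

namespace IsCDDensity

variable {N D' : ℝ} {h : ℝ → ℝ}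

theorem rpow_rpow_one_div (hN : 1 < N) (hh : IsCDDensity N D' h) {x : ℝ} (hx : x ∈ Icc 0 D') :
    (h x ^ (1 / (N - 1))) ^ (N - 1) = h x := by
  rw [one_div, Real.rpow_inv_rpow (hh.1 x hx) (by linarith)]

theorem le_rpow_of_rpow_one_div_le (hN : 1 < N) (hh : IsCDDensity N D' h) {x c : ℝ}
    (hx : x ∈ Icc 0 D') (hc : h x ^ (1 / (N - 1)) ≤ c) : h x ≤ c ^ (N - 1) := by
  rw [← hh.rpow_rpow_one_div hN hx]
  exact Real.rpow_le_rpow (Real.rpow_nonneg (hh.1 x hx) _) hc (by linarith)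

theorem mul_rpow_le_mul_rpow (hN : 1 < N) (hh : IsCDDensity N D' h) {x y : ℝ} (hx : 0 ≤ x)
    (hxy : x ≤ y) (hy : y ≤ D') : x ^ (N - 1) * h y ≤ y ^ (N - 1) * h x := by
  have hy0 : 0 ≤ y := hx.trans hxy
  have hxI : x ∈ Icc 0 D' := ⟨hx, hxy.trans hy⟩
  have hyI : y ∈ Icc 0 D' := ⟨hy0, hy⟩
  have hchord := hh.2.2.mul_apply_le_mul_apply (Real.rpow_nonneg (hh.1 0 ⟨le_rfl, hy0.trans hy⟩) _)
    hx hxy hy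
  have := Real.rpow_le_rpow (mul_nonneg hx (Real.rpow_nonneg (hh.1 y hyI) _)) hchord
    (by linarith : (0:ℝ) ≤ N - 1)
  rwa [Real.mul_rpow hx (Real.rpow_nonneg (hh.1 y hyI) _),
    Real.mul_rpow hy0 (Real.rpow_nonneg (hh.1 x hxI) _), hh.rpow_rpow_one_div hN hxI,
    hh.rpow_rpow_one_div hN hyI] at this

end IsCDDensity

namespace IsProbCDDensity

variable {N D' : ℝ} {h : ℝ → ℝ}

theorem intervalIntegrable_s5 (hh : IsProbCDDensity N D' h) {a b : ℝ} (ha : 0 ≤ a) (hab : a ≤ b)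
    (hb : b ≤ D') : IntervalIntegrable h volume a b := by
  have hint : IntegrableOn h (Icc 0 D') := by
    by_contra hcon
    have := hh.2
    rw [integral_undef hcon] at this
    exact zero_ne_one this
  rw [intervalIntegrable_iff_integrableOn_Ioc_of_le hab]
  exact hint.mono_set (Ioc_subset_Icc_self.trans (Icc_subset_Icc ha hb))

theorem integral_eq_one_sub (hh : IsProbCDDensity N D' h) {r : ℝ} (hr : r ∈ Icc 0 D') :
    ∫ x in r..D', h x = 1 - ∫ x in (0:ℝ)..r, h x := by
  rw [eq_sub_iff_add_eq', intervalIntegral.integral_add_adjacent_intervals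
    (hh.intervalIntegrable_s5 le_rfl hr.1 hr.2) (hh.intervalIntegrable_s5 hr.1 hr.2 le_rfl),
    intervalIntegral.integral_of_le (hr.1.trans hr.2), ← integral_Icc_eq_integral_Ioc, hh.2]

theorem rpow_le_integral_mul_rpow (hN : 1 < N) (hh : IsProbCDDensity N D' h) {r : ℝ}
    (hr : r ∈ Ioo 0 D') : r ^ N ≤ (∫ x in (0:ℝ)..r, h x) * D' ^ N := by
  obtain ⟨hr0, hrD⟩ := hr
  have hN0 : 0 < N := by linarith
  have hN1 : -1 < N - 1 := by linarith
  set w := ∫ x in (0:ℝ)..r, h x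
  have hpow : ∀ a b : ℝ, ∫ x in a..b, x ^ (N - 1) * h r = (b ^ N - a ^ N) / N * h r := by
    intro a b
    rw [intervalIntegral.integral_mul_const, integral_rpow (Or.inl hN1), sub_add_cancel]
  have hleft : r ^ N / N * h r ≤ r ^ (N - 1) * w := by
    have := intervalIntegral.integral_mono_on hr0.le
      ((intervalIntegral.intervalIntegrable_rpow' hN1).mul_const (h r))
      ((hh.intervalIntegrable_s5 le_rfl hr0.le hrD.le).const_mul (r ^ (N - 1)))
      fun x hx => hh.1.mul_rpow_le_mul_rpow hN hx.1 hx.2 hrD.le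
    rwa [hpow, Real.zero_rpow hN0.ne', sub_zero, intervalIntegral.integral_const_mul] at this
  have hright : r ^ (N - 1) * (1 - w) ≤ (D' ^ N - r ^ N) / N * h r := by
    have := intervalIntegral.integral_mono_on hrD.le
      ((hh.intervalIntegrable_s5 hr0.le hrD.le le_rfl).const_mul (r ^ (N - 1)))
      ((intervalIntegral.intervalIntegrable_rpow' hN1).mul_const (h r))
      fun t ht => hh.1.mul_rpow_le_mul_rpow hN hr0.le ht.1 ht.2
    rwa [hpow, intervalIntegral.integral_const_mul, hh.integral_eq_one_sub ⟨hr0.le, hrD.le⟩] at this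
  have hrN1 : 0 < r ^ (N - 1) := Real.rpow_pos_of_pos hr0 _
  have hDr : 0 ≤ D' ^ N - r ^ N := sub_nonneg.2 (Real.rpow_le_rpow hr0.le hrD.le hN0.le)
  have key : r ^ (N - 1) * ((1 - w) * r ^ N) ≤ r ^ (N - 1) * (w * (D' ^ N - r ^ N)) :=
    calc r ^ (N - 1) * ((1 - w) * r ^ N) = r ^ (N - 1) * (1 - w) * r ^ N := by ring
      _ ≤ (D' ^ N - r ^ N) / N * h r * r ^ N := by gcongr
      _ = r ^ N / N * h r * (D' ^ N - r ^ N) := by ring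
      _ ≤ r ^ (N - 1) * w * (D' ^ N - r ^ N) := by gcongr
      _ = r ^ (N - 1) * (w * (D' ^ N - r ^ N)) := by ring
  linarith [le_of_mul_le_mul_left key hrN1]

theorem le_mul_integral_rpow (hN : 1 < N) (hh : IsProbCDDensity N D' h) {r : ℝ}
    (hr : r ∈ Ioo 0 D') : r ≤ D' * (∫ x in (0:ℝ)..r, h x) ^ (1 / N) := by
  have hN0 : 0 < N := by linarith
  have hD' : 0 ≤ D' := hr.1.le.trans hr.2.le
  have hw : 0 ≤ ∫ x in (0:ℝ)..r, h x :=
    intervalIntegral.integral_nonneg hr.1.le fun x hx => hh.1.1 x ⟨hx.1, hx.2.trans hr.2.le⟩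
  have := Real.rpow_le_rpow (Real.rpow_nonneg hr.1.le N) (hh.rpow_le_integral_mul_rpow hN hr)
    (by positivity : 0 ≤ 1 / N)
  rw [one_div] at this ⊢
  rwa [Real.mul_rpow hw (Real.rpow_nonneg hD' N), Real.rpow_rpow_inv hr.1.le hN0.ne',
    Real.rpow_rpow_inv hD' hN0.ne', mul_comm] at this

theorem exists_supporting_cone (hN : 1 < N) (hh : IsProbCDDensity N D' h) {r : ℝ}
    (hr : r ∈ Ioo 0 D') (hright : (D' - r) * h r < ∫ x in r..D', h x) :
    ∃ σ A, 0 < σ ∧ r ≤ A ∧ h r = (σ * A) ^ (N - 1) ∧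
      ∀ t ∈ Icc 0 D', h t ≤ (σ * (t - (r - A))) ^ (N - 1) := by
  obtain ⟨hr0, hrD⟩ := hr
  have hrI : r ∈ Icc 0 D' := ⟨hr0.le, hrD.le⟩
  have h0I : (0:ℝ) ∈ Icc 0 D' := ⟨le_rfl, hr0.le.trans hrD.le⟩
  set γ := h r ^ (1 / (N - 1))
  have hγ : 0 < γ := Real.rpow_pos_of_pos (hh.1.2.1 r ⟨hr0, hrD⟩) _
  obtain ⟨σ, hσ⟩ := hh.1.2.2.exists_le_add_mul_sub
    (by rw [interior_Icc]; exact ⟨hr0, hrD⟩ : r ∈ interior (Icc 0 D'))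
  have hσ0 : 0 < σ := by
    by_contra! hσ0
    have hflat : ∀ t ∈ Icc r D', h t ≤ h r := by
      intro t ht
      have htI : t ∈ Icc 0 D' := ⟨hr0.le.trans ht.1, ht.2⟩
      rw [← hh.1.rpow_rpow_one_div hN hrI]
      refine hh.1.le_rpow_of_rpow_one_div_le hN htI ((hσ t htI).trans ?_)
      nlinarith [ht.1]
    have := intervalIntegral.integral_mono_on hrD.le
      (hh.intervalIntegrable_s5 hr0.le hrD.le le_rfl) intervalIntegrable_const hflat
    rw [intervalIntegral.integral_const, smul_eq_mul] at this
    linarith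
  refine ⟨σ, γ / σ, hσ0, ?_, ?_, fun t ht => (hh.1.le_rpow_of_rpow_one_div_le hN ht
    (hσ t ht)).trans_eq ?_⟩
  · have := (Real.rpow_nonneg (hh.1.1 0 h0I) _).trans (hσ 0 h0I)
    rw [le_div_iff₀ hσ0]
    linarith
  · rw [mul_div_cancel₀ _ hσ0.ne', hh.1.rpow_rpow_one_div hN hrI]
  · congr 1
    field_simp
    ring

theorem cone_mass_bounds (hN : 1 < N) (hh : IsProbCDDensity N D' h) {r σ A D : ℝ}
    (hr : r ∈ Ioo 0 D') (hD : D' ≤ D) (hσ : 0 < σ) (hrA : r ≤ A)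
    (hcone : ∀ t ∈ Icc 0 D', h t ≤ (σ * (t - (r - A))) ^ (N - 1)) :
    N * (∫ x in (0:ℝ)..r, h x) ≤ σ ^ (N - 1) * (A ^ N - (A - r) ^ N) ∧
      N * (∫ x in r..D', h x) ≤ σ ^ (N - 1) * (A + D) ^ N ∧
      ∫ x in r..D', h x ≤ D * (σ * (A + D)) ^ (N - 1) := by
  obtain ⟨hr0, hrD⟩ := hr
  have hN0 : 0 < N := by linarith
  have hN1 : 0 ≤ N - 1 := by linarith
  have hA : 0 ≤ A := hr0.le.trans hrA
  have hright := hh.intervalIntegrable_s5 hr0.le hrD.le le_rfl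
  have hleft := integral_le_of_le_mul_sub_rpow hσ.le (by linarith) hr0.le hN1
    (hh.intervalIntegrable_s5 le_rfl hr0.le hrD.le) fun t ht => hcone t ⟨ht.1, ht.2.trans hrD.le⟩
  rw [sub_add_cancel, sub_sub_cancel, zero_sub, neg_sub, le_div_iff₀ hN0] at hleft
  refine ⟨by linarith, ?_, ?_⟩
  · have := integral_le_of_le_mul_sub_rpow hσ.le (by linarith) hrD.le hN1 hright
      fun t ht => hcone t ⟨hr0.le.trans ht.1, ht.2⟩
    rw [sub_add_cancel, sub_sub_cancel, le_div_iff₀ hN0] at this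
    have hmono : (D' - (r - A)) ^ N ≤ (A + D) ^ N := by gcongr <;> linarith
    nlinarith [Real.rpow_nonneg hA N, Real.rpow_nonneg hσ.le (N - 1)]
  · have := intervalIntegral.integral_mono_on hrD.le hright intervalIntegrable_const
      fun t ht => (hcone t ⟨hr0.le.trans ht.1, ht.2⟩).trans
        (Real.rpow_le_rpow (by nlinarith [ht.1]) (by nlinarith [ht.2]) hN1 :
          (σ * (t - (r - A))) ^ (N - 1) ≤ (σ * (A + D)) ^ (N - 1))
    rw [intervalIntegral.integral_const, smul_eq_mul] at this
    nlinarith [Real.rpow_nonneg (by nlinarith : 0 ≤ σ * (A + D)) (N - 1)]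

theorem radiusBound_mul_le (hN : 1 < N) (hh : IsProbCDDensity N D' h) {r D u η : ℝ}
    (hr : r ∈ Ioo 0 D') (hD : D' ≤ D) (hη₀ : 0 < apexBound₀ N η) (hη1 : η < 1) (hu : 0 < u)
    (huη : u ≤ η) (hw : ∫ x in (0:ℝ)..r, h x = u ^ N)
    (hres : D * h r ≤ (1 + η) * N * u ^ (N - 1)) :
    radiusBound N η * (D * u) ≤ r := by
  have hmass : ∫ x in r..D', h x = 1 - u ^ N := by
    rw [hh.integral_eq_one_sub ⟨hr.1.le, hr.2.le⟩, hw]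
  have hsmall := lt_one_sub_rpow_of_apexBound₀_pos hN hη₀ hη1 hu huη
  have hDr : (D' - r) * h r ≤ D * h r :=
    mul_le_mul_of_nonneg_right (by linarith [hr.1]) (hh.1.2.1 r hr).le
  obtain ⟨σ, A, hσ, hrA, hhr, hcone⟩ := hh.exists_supporting_cone hN hr (by linarith)
  obtain ⟨hleft, hright, hright'⟩ := hh.cone_mass_bounds hN hr hD hσ hrA hcone
  rw [hw] at hleft
  rw [hmass] at hright hright'
  exact radiusBound_mul_le_of_masses hN hη₀ hη1 hσ hr.1 hrA (hr.1.trans_le (hr.2.le.trans hD))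
    hu huη (hhr ▸ hres) hleft hright hright'

end IsProbCDDensity

/-- Proposition 5.4 (almost rigidity for the segment `[0, r_h(w)]`): if `w` and the residual
`Res_h^D(w) = D h(r_h(w)) / (N w^{1-1/N}) - 1` are small enough, then
`r_h(w)` is `ε`-close to `D w^{1/N}`.  Here `r = r_h(w)` is characterized by
`r ∈ (0, D')` and `∫_0^r h = w`. -/
theorem almost_rigidity_segment (N : ℝ) (hN : 1 < N) :
    ∀ ε : ℝ, 0 < ε → ∃ wbar : ℝ, 0 < wbar ∧ ∃ δbar : ℝ, 0 < δbar ∧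
      ∀ D D' : ℝ, 0 < D' → D' ≤ D →
      ∀ h : ℝ → ℝ, IsProbCDDensity N D' h →
      ∀ w : ℝ, 0 < w → w ≤ wbar →
      ∀ r : ℝ, r ∈ Set.Ioo 0 D' → (∫ x in (0:ℝ)..r, h x) = w →
        D * h r / (N * w ^ (1 - 1 / N)) - 1 ≤ δbar →
        (1 - ε) * D * w ^ (1 / N) ≤ r ∧ r ≤ (1 + ε) * D * w ^ (1 / N) := by
  intro ε hε
  obtain ⟨η, ⟨hη₀, hη1, hηε⟩, hη⟩ := ((((eventually_apexBound₀_pos hN).and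
    ((eventually_lt_nhds one_pos).and (eventually_lt_radiusBound hN hε))).filter_mono
      nhdsWithin_le_nhds).and (self_mem_nhdsWithin : ∀ᶠ η in 𝓝[>] (0:ℝ), 0 < η)).exists
  refine ⟨η ^ N, Real.rpow_pos_of_pos hη N, η, hη, ?_⟩
  intro D D' hD' hD'D h hh w hw hwη r hr hrw hres
  have hN0 : 0 < N := by linarith
  have hD : 0 < D := hD'.trans_le hD'D
  set u := w ^ (1 / N)
  have hu : 0 < u := Real.rpow_pos_of_pos hw _
  have huN : u ^ N = w := by rw [← Real.rpow_mul hw.le, one_div_mul_cancel hN0.ne', Real.rpow_one]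
  have huη : u ≤ η := (Real.rpow_le_rpow hw.le hwη (by positivity)).trans_eq
    (by rw [← Real.rpow_mul hη.le, mul_one_div_cancel hN0.ne', Real.rpow_one])
  have hres' : D * h r ≤ (1 + η) * N * u ^ (N - 1) := by
    rw [← Real.rpow_mul hw.le, show 1 / N * (N - 1) = 1 - 1 / N by field_simp]
    rw [sub_le_iff_le_add', div_le_iff₀ (by positivity)] at hres
    linarith
  have hlow := hh.radiusBound_mul_le hN hr hD'D hη₀ hη1 hu huη (hrw.trans huN.symm) hres'
  have hup := hh.le_mul_integral_rpow hN hr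
  rw [hrw] at hup
  constructor
  · calc (1 - ε) * D * u = (1 - ε) * (D * u) := by ring
      _ ≤ radiusBound N η * (D * u) := by gcongr
      _ ≤ r := hlow
  · calc r ≤ D' * u := hup
      _ ≤ D * u := by gcongr
      _ ≤ (1 + ε) * D * u := by nlinarith [mul_pos hD hu]
end
end

section
/- Fix a real number N > 1. Define f : [0,1) × [0,∞) → ℝ by f(t,η) := (1 + η − t^N)/(1 − t), and define g : [0,∞) → [0,∞] by g(η) := sup{ t − s : t, s ∈ [0,1), f(t,0) ≤ f(s,η) }. Then lim_{η→0⁺} g(η) = 0; equivalently, for every ε > 0 there exists η̄ > 0 such that for all η ∈ [0, η̄] and all t, s ∈ [0,1) with f(t,0) ≤ f(s,η), one has t − s ≤ ε. -/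
/-!
For `N > 1`, `φ(t) = f(t, 0) = (1 - t^N)/(1 - t)` is the slope of the convex function `t ↦ t^N`
between `t` and `1`, hence continuous and strictly increasing on `[0, 1)`, and
`f(s, η) = φ(s) + η/(1 - s)`. If `t - s > ε`, then `1 - s > ε`, so the perturbation is below `η/ε`,
while by compactness `φ` increases by at least some `δ > 0` over every step of length `ε/2`
inside `[0, 1 - ε/2]`. Hence `f(t, 0) ≤ f(s, η)` forces `t - s ≤ ε` once `η ≤ εδ/2`, which bounds
`g(η)` by `ε`.
-/

noncomputable section

/-- The function `f(t, η) = (1 + η - t^N)/(1 - t)` of Lemma 5.8. -/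
def fAux (N t η : ℝ) : ℝ := (1 + η - t ^ N) / (1 - t)

/-- The function `g(η) = sup { t - s : t, s ∈ [0,1), f(t,0) ≤ f(s,η) }` of Lemma 5.8. -/
def gAux (N η : ℝ) : ℝ :=
  sSup {d : ℝ | ∃ t s : ℝ, t ∈ Set.Ico (0:ℝ) 1 ∧ s ∈ Set.Ico (0:ℝ) 1 ∧
    fAux N t 0 ≤ fAux N s η ∧ d = t - s}

open Set Filter Topology

lemma StrictMonoOn.exists_pos_forall_add_le {f : ℝ → ℝ} {a b ε : ℝ} (hε : 0 < ε)
    (hmono : StrictMonoOn f (Icc a (b + ε))) (hcont : ContinuousOn f (Icc a (b + ε))) :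
    ∃ δ > 0, ∀ s ∈ Icc a b, f s + δ ≤ f (s + ε) := by
  have hshift : MapsTo (· + ε) (Icc a b) (Icc a (b + ε)) :=
    fun s hs => ⟨by linarith [hs.1], by linarith [hs.2]⟩
  have hsub : Icc a b ⊆ Icc a (b + ε) := Icc_subset_Icc_right (by linarith)
  have hinc : ContinuousOn (fun s => f (s + ε) - f s) (Icc a b) :=
    (hcont.comp (continuousOn_id.add continuousOn_const) hshift).sub (hcont.mono hsub)
  obtain ⟨δ, hδ, hle⟩ := isCompact_Icc.exists_forall_le' hinc fun s hs =>
    sub_pos.2 <| hmono (hsub hs) (hshift hs) (by linarith)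
  exact ⟨δ, hδ, fun s hs => by linarith [hle s hs]⟩

lemma fAux_zero_eq_slope (N t : ℝ) : fAux N t 0 = (t ^ N - 1 ^ N) / (t - 1) := by
  rw [fAux, Real.one_rpow, add_zero, ← neg_div_neg_eq]
  ring_nf

lemma fAux_zero_strictMonoOn {N : ℝ} (hN : 1 < N) :
    StrictMonoOn (fun t => fAux N t 0) (Ico 0 1) := by
  intro a ha b hb hab
  simp only [fAux_zero_eq_slope]
  exact (strictConvexOn_rpow hN).secant_strict_mono (mem_Ici.2 zero_le_one) (mem_Ici.2 ha.1)
    (mem_Ici.2 hb.1) ha.2.ne hb.2.ne hab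

lemma fAux_zero_continuousOn {N : ℝ} (hN : 0 ≤ N) :
    ContinuousOn (fun t => fAux N t 0) (Iio 1) := by
  refine ContinuousOn.div (by fun_prop) (by fun_prop) fun t ht => ?_
  exact sub_ne_zero.2 (ne_of_lt ht).symm

lemma fAux_eq_fAux_zero_add {N s : ℝ} (hs : s ≠ 1) (η : ℝ) :
    fAux N s η = fAux N s 0 + η / (1 - s) := by
  have : 1 - s ≠ 0 := sub_ne_zero.2 hs.symm
  simp only [fAux]
  field_simp
  ring

lemma fAux_zero_le_fAux {N s η : ℝ} (hs : s < 1) (hη : 0 ≤ η) : fAux N s 0 ≤ fAux N s η := by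
  rw [fAux_eq_fAux_zero_add hs.ne η]
  exact le_add_of_nonneg_right (div_nonneg hη (sub_pos.2 hs).le)

lemma exists_pos_forall_sub_le_of_fAux_le {N : ℝ} (hN : 1 < N) {ε : ℝ} (hε : 0 < ε) :
    ∃ ηbar : ℝ, 0 < ηbar ∧ ∀ η : ℝ, 0 ≤ η → η ≤ ηbar →
      ∀ t s : ℝ, t ∈ Ico (0:ℝ) 1 → s ∈ Ico (0:ℝ) 1 → fAux N t 0 ≤ fAux N s η → t - s ≤ ε := by
  have hsub : Icc (0:ℝ) (1 - ε + ε / 2) ⊆ Ico 0 1 := Icc_subset_Ico_right (by linarith)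
  obtain ⟨δ, hδ, hstep⟩ := (fAux_zero_strictMonoOn hN).mono hsub |>.exists_pos_forall_add_le
    (half_pos hε) ((fAux_zero_continuousOn (by linarith)).mono (hsub.trans Ico_subset_Iio_self))
  refine ⟨ε * δ / 2, by positivity, fun η hη hηbar t s ht hs hle => ?_⟩
  by_contra! hgap
  have hs_le : s ≤ 1 - ε := by linarith [ht.2]
  have hmid : fAux N (s + ε / 2) 0 < fAux N t 0 :=
    fAux_zero_strictMonoOn hN ⟨by linarith [hs.1], by linarith⟩ ht (by linarith)
  have hpert : η / (1 - s) ≤ δ / 2 := by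
    rw [div_le_iff₀ (by linarith)]
    nlinarith
  have := hstep s ⟨hs.1, hs_le⟩
  rw [fAux_eq_fAux_zero_add hs.2.ne] at hle
  linarith

lemma gAux_mem_Icc {N η ε : ℝ} (hη : 0 ≤ η)
    (hbound : ∀ t s : ℝ, t ∈ Ico (0:ℝ) 1 → s ∈ Ico (0:ℝ) 1 → fAux N t 0 ≤ fAux N s η → t - s ≤ ε) :
    gAux N η ∈ Icc 0 ε := by
  have hbdd : ∀ d ∈ {d : ℝ | ∃ t s : ℝ, t ∈ Ico (0:ℝ) 1 ∧ s ∈ Ico (0:ℝ) 1 ∧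
      fAux N t 0 ≤ fAux N s η ∧ d = t - s}, d ≤ ε := by
    rintro d ⟨t, s, ht, hs, hle, rfl⟩
    exact hbound t s ht hs hle
  have hzero : (0:ℝ) ∈ {d : ℝ | ∃ t s : ℝ, t ∈ Ico (0:ℝ) 1 ∧ s ∈ Ico (0:ℝ) 1 ∧
      fAux N t 0 ≤ fAux N s η ∧ d = t - s} :=
    ⟨0, 0, left_mem_Ico.2 one_pos, left_mem_Ico.2 one_pos, fAux_zero_le_fAux one_pos hη,
      (sub_self 0).symm⟩
  exact ⟨le_csSup ⟨ε, hbdd⟩ hzero, csSup_le ⟨0, hzero⟩ hbdd⟩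

/-- Lemma 5.8 (monotonicity of `f`): `lim_{η → 0⁺} g(η) = 0`; equivalently, for every `ε > 0`
there is `η̄ > 0` such that for all `η ∈ [0, η̄]` and `t, s ∈ [0,1)` with `f(t,0) ≤ f(s,η)`,
one has `t - s ≤ ε`. -/
theorem gAux_tendsto_zero (N : ℝ) (hN : 1 < N) :
    Filter.Tendsto (gAux N) (nhdsWithin 0 (Set.Ioi 0)) (nhds 0) ∧
    ∀ ε : ℝ, 0 < ε → ∃ ηbar : ℝ, 0 < ηbar ∧
      ∀ η : ℝ, 0 ≤ η → η ≤ ηbar →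
      ∀ t s : ℝ, t ∈ Set.Ico (0:ℝ) 1 → s ∈ Set.Ico (0:ℝ) 1 →
        fAux N t 0 ≤ fAux N s η → t - s ≤ ε := by
  refine ⟨?_, fun ε hε => exists_pos_forall_sub_le_of_fAux_le hN hε⟩
  rw [Metric.tendsto_nhds]
  intro ε hε
  obtain ⟨ηbar, hηbar, hbound⟩ := exists_pos_forall_sub_le_of_fAux_le hN (half_pos hε)
  filter_upwards [Ioc_mem_nhdsGT hηbar] with η hη
  have hg := gAux_mem_Icc hη.1.le (hbound η hη.1.le hη.2)
  rw [Real.dist_0_eq_abs, abs_of_nonneg hg.1]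
  linarith [hg.2]
end
end
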